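/- arXiv:1111.0608 — 9 statements merged into one kernel-verified Lean document; each statement's English description precedes it below -/
import Mathlib

section
/- Let N ≥ 1, let a_0 = 1 < a_1 < a_2 < ⋯ < a_N be real numbers, let m(𝐚) be the least natural number m such that ∑_{k=0}^{N-1} (a_k/a_N)^m < 1, and let δ > 0. If f : [0,δ] → ℝ is m(𝐚)-times continuously differentiable on [0,δ] and satisfies f(x) + f(a_1 x) + ⋯ + f(a_N x) = 0 for every x such that {x, a_1 x, …, a_N x} ⊆ [0,δ], then f is identically zero on [0,δ]. -/
/-!
Rescaling by `a N` turns the equation into `∑_{k ≤ N} f (b k * x) = 0` on `[0, δ]`, with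
`b k = a k / a N ∈ (0, 1]` and `b N = 1`. Differentiating `j ≤ m` times gives
`∑_{k ≤ N} b k ^ j * f⁽ʲ⁾ (b k * x) = 0`. For `j = m` this bounds `|f⁽ᵐ⁾ x|` by
`(∑_{k < N} b k ^ m) * max |f⁽ᵐ⁾|`, and as this factor is `< 1` the maximum of `|f⁽ᵐ⁾|` on
`[0, δ]` is `0`. At `x = 0` the equations read `(∑_{k ≤ N} b k ^ j) * f⁽ʲ⁾ 0 = 0`, so all
derivatives of order `< m` vanish at `0`, and integrating back down from `f⁽ᵐ⁾ = 0` gives `f = 0`.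
-/

open Set Finset Filter Topology

theorem exists_sum_pow_lt_one {ι : Type*} (s : Finset ι) (r : ι → ℝ)
    (hr₀ : ∀ i ∈ s, 0 ≤ r i) (hr₁ : ∀ i ∈ s, r i < 1) : ∃ m : ℕ, ∑ i ∈ s, r i ^ m < 1 := by
  have h : Tendsto (fun m : ℕ => ∑ i ∈ s, r i ^ m) atTop (𝓝 0) := by
    simpa using tendsto_finsetSum s fun i hi =>
      tendsto_pow_atTop_nhds_zero_of_lt_one (hr₀ i hi) (hr₁ i hi)
  exact ((tendsto_order.1 h).2 1 one_pos).exists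

theorem IsCompact.eqOn_zero_of_abs_le_sum {X ι : Type*} [TopologicalSpace X] {K : Set X}
    (hK : IsCompact K) {g : X → ℝ} (hg : ContinuousOn g K) (s : Finset ι) (w : ι → ℝ)
    (φ : ι → X → X) (hw₀ : ∀ i ∈ s, 0 ≤ w i) (hw₁ : ∑ i ∈ s, w i < 1)
    (hφ : ∀ i ∈ s, MapsTo (φ i) K K) (hle : ∀ x ∈ K, |g x| ≤ ∑ i ∈ s, w i * |g (φ i x)|) :
    EqOn g 0 K := by
  rcases K.eq_empty_or_nonempty with rfl | hne
  · exact eqOn_empty _ _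
  obtain ⟨x₀, hx₀, hmax⟩ := hK.exists_isMaxOn hne hg.abs
  have hmax' : ∀ x ∈ K, |g x| ≤ |g x₀| := fun x hx => hmax hx
  have hM : |g x₀| ≤ (∑ i ∈ s, w i) * |g x₀| := calc
    |g x₀| ≤ ∑ i ∈ s, w i * |g (φ i x₀)| := hle x₀ hx₀
    _ ≤ ∑ i ∈ s, w i * |g x₀| :=
      sum_le_sum fun i hi => mul_le_mul_of_nonneg_left (hmax' _ (hφ i hi hx₀)) (hw₀ i hi)
    _ = (∑ i ∈ s, w i) * |g x₀| := (sum_mul ..).symm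
  have hM₀ : |g x₀| ≤ 0 := by nlinarith [abs_nonneg (g x₀)]
  exact fun x hx => abs_nonpos_iff.1 ((hmax' x hx).trans hM₀)

theorem sum_pow_mul_iteratedDerivWithin_comp_mul_eq_zero {ι : Type*} {f : ℝ → ℝ}
    {s t : Set ℝ} {m : ℕ} (hf : ContDiffOn ℝ m f t) (hs : UniqueDiffOn ℝ s)
    (ht : UniqueDiffOn ℝ t) (S : Finset ι) (c : ι → ℝ) (hc : ∀ i ∈ S, MapsTo (c i * ·) s t)
    (heq : ∀ x ∈ s, ∑ i ∈ S, f (c i * x) = 0) {j : ℕ} (hj : j ≤ m) :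
    ∀ x ∈ s, ∑ i ∈ S, c i ^ j * iteratedDerivWithin j f t (c i * x) = 0 := by
  induction j with
  | zero => simpa using heq
  | succ j ih =>
    intro x hx
    have hdiff := hf.differentiableOn_iteratedDerivWithin (by exact_mod_cast hj) ht
    have hterm : ∀ i ∈ S,
        HasDerivWithinAt (fun y => c i ^ j * iteratedDerivWithin j f t (c i * y))
          (c i ^ (j + 1) * iteratedDerivWithin (j + 1) f t (c i * x)) s x := by
      intro i hi
      have hg := (hdiff _ (hc i hi hx)).hasDerivWithinAt
      rw [← iteratedDerivWithin_succ] at hg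
      have hlin : HasDerivWithinAt (c i * ·) (c i) s x := by
        simpa using (hasDerivWithinAt_id x s).const_mul (c i)
      exact ((hg.comp x hlin (hc i hi)).const_mul (c i ^ j)).congr_deriv (by ring)
    have hzero : HasDerivWithinAt
        (fun y => ∑ i ∈ S, c i ^ j * iteratedDerivWithin j f t (c i * y)) 0 s x :=
      (hasDerivWithinAt_const x s 0).congr (fun y hy => ih (by omega) y hy) (ih (by omega) x hx)
    exact (hs x hx).eq_deriv s (HasDerivWithinAt.fun_sum hterm) hzero

theorem eqOn_zero_of_iteratedDerivWithin_eq_zero {f : ℝ → ℝ} {a b : ℝ} (hab : a < b) {m : ℕ}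
    (hf : ContDiffOn ℝ m f (Icc a b))
    (htop : EqOn (iteratedDerivWithin m f (Icc a b)) 0 (Icc a b))
    (hinit : ∀ j < m, iteratedDerivWithin j f (Icc a b) a = 0) : EqOn f 0 (Icc a b) := by
  suffices ∀ j ≤ m, EqOn (iteratedDerivWithin j f (Icc a b)) 0 (Icc a b) by
    simpa using this 0 (Nat.zero_le m)
  intro j hj
  induction hj using Nat.decreasingInduction with
  | self => exact htop
  | of_succ j hj ih =>
    have hdiff := hf.differentiableOn_iteratedDerivWithin (by exact_mod_cast hj)
      (uniqueDiffOn_Icc hab)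
    have hconst := constant_of_derivWithin_zero hdiff fun y hy => by
      rw [← iteratedDerivWithin_succ]
      exact ih (Ico_subset_Icc_self hy)
    intro x hx
    rw [hconst x hx, hinit j hj, Pi.zero_apply]

theorem mapsTo_const_mul_Icc_zero {c : ℝ} (hc₀ : 0 ≤ c) (hc₁ : c ≤ 1) (δ : ℝ) :
    MapsTo (c * ·) (Icc 0 δ) (Icc 0 δ) := fun _ hx =>
  ⟨mul_nonneg hc₀ hx.1, (mul_le_of_le_one_left hx.1 hc₁).trans hx.2⟩

theorem eqOn_zero_of_sum_comp_mul_eq_zero {f : ℝ → ℝ} {δ : ℝ} (hδ : 0 < δ) {N m : ℕ}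
    {b : ℕ → ℝ} (hb₀ : ∀ k ≤ N, 0 < b k) (hb₁ : ∀ k ≤ N, b k ≤ 1) (hbN : b N = 1)
    (hm : ∑ k ∈ range N, b k ^ m < 1) (hf : ContDiffOn ℝ m f (Icc 0 δ))
    (heq : ∀ x ∈ Icc 0 δ, ∑ k ∈ range (N + 1), f (b k * x) = 0) : EqOn f 0 (Icc 0 δ) := by
  have ht := uniqueDiffOn_Icc hδ
  have hmaps : ∀ k ≤ N, MapsTo (b k * ·) (Icc 0 δ) (Icc 0 δ) := fun k hk =>
    mapsTo_const_mul_Icc_zero (hb₀ k hk).le (hb₁ k hk) δ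
  have hderiv := fun j (hj : j ≤ m) => sum_pow_mul_iteratedDerivWithin_comp_mul_eq_zero hf ht ht
    (range (N + 1)) b (fun k hk => hmaps k (mem_range_succ_iff.1 hk)) heq hj
  refine eqOn_zero_of_iteratedDerivWithin_eq_zero hδ hf ?_ fun j hj => ?_
  · refine isCompact_Icc.eqOn_zero_of_abs_le_sum (hf.continuousOn_iteratedDerivWithin le_rfl ht)
      (range N) (b · ^ m) (fun k => (b k * ·))
      (fun k hk => pow_nonneg (hb₀ k (mem_range.1 hk).le).le m) hm
      (fun k hk => hmaps k (mem_range.1 hk).le) fun x hx => ?_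
    have h := hderiv m le_rfl x hx
    rw [sum_range_succ, hbN, one_pow, one_mul, one_mul] at h
    set g := iteratedDerivWithin m f (Icc 0 δ)
    calc |g x| = |∑ k ∈ range N, b k ^ m * g (b k * x)| := by
          rw [eq_neg_of_add_eq_zero_right h, abs_neg]
      _ ≤ ∑ k ∈ range N, |b k ^ m * g (b k * x)| := abs_sum_le_sum_abs _ _
      _ = ∑ k ∈ range N, b k ^ m * |g (b k * x)| := sum_congr rfl fun k hk => by
          rw [abs_mul, abs_of_pos (pow_pos (hb₀ k (mem_range.1 hk).le) m)]
  · have h := hderiv j hj.le 0 (left_mem_Icc.2 hδ.le)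
    simp only [mul_zero, ← sum_mul] at h
    have hpos : 0 < ∑ k ∈ range (N + 1), b k ^ j :=
      sum_pos (fun k hk => pow_pos (hb₀ k (mem_range_succ_iff.1 hk)) j)
        nonempty_range_add_one
    exact (mul_eq_zero.1 h).resolve_left hpos.ne'

theorem stmt_0_general (N : ℕ) (a : ℕ → ℝ) (ha0 : a 0 = 1)
    (hmono : ∀ k, k < N → a k < a (k + 1)) (δ : ℝ) (hδ : 0 < δ) (f : ℝ → ℝ)
    (hf : ContDiffOn ℝ
      ((sInf {m : ℕ | ∑ k ∈ Finset.range N, (a k / a N) ^ m < 1} : ℕ) : ℕ∞)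
      f (Set.Icc 0 δ))
    (heq : ∀ x : ℝ, (∀ k ≤ N, a k * x ∈ Set.Icc 0 δ) →
      ∑ k ∈ Finset.range (N + 1), f (a k * x) = 0) :
    ∀ x ∈ Set.Icc 0 δ, f x = 0 := by
  have ha : StrictMonoOn a (Set.Iic N) := strictMonoOn_Iic_of_lt_succ fun k hk => by
    rw [Order.succ_eq_add_one]
    exact hmono k hk
  have ha₀ : ∀ k ≤ N, 0 < a k := fun k hk =>
    (ha0 ▸ one_pos).trans_le (ha.monotoneOn (Nat.zero_le N) hk (Nat.zero_le k))
  have haN := ha₀ N le_rfl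
  have hb₀ : ∀ k ≤ N, 0 < a k / a N := fun k hk => div_pos (ha₀ k hk) haN
  have hb₁ : ∀ k ≤ N, a k / a N ≤ 1 := fun k hk =>
    (div_le_one haN).2 (ha.monotoneOn hk Set.self_mem_Iic hk)
  have hm := Nat.sInf_mem (exists_sum_pow_lt_one (range N) (a · / a N)
    (fun k hk => (hb₀ k (mem_range.1 hk).le).le)
    fun k hk => (div_lt_one haN).2 (ha (mem_range.1 hk).le Set.self_mem_Iic (mem_range.1 hk)))
  refine eqOn_zero_of_sum_comp_mul_eq_zero hδ hb₀ hb₁ (div_self haN.ne') hm hf fun x hx => ?_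
  have hrescale : ∀ k, a k * (x / a N) = a k / a N * x := fun k => by ring
  simpa only [hrescale] using heq (x / a N) fun k hk => by
    rw [hrescale]
    exact mapsTo_const_mul_Icc_zero (hb₀ k hk).le (hb₁ k hk) δ hx

/-- Let `N ≥ 1`, `a 0 = 1 < a 1 < ⋯ < a N`, let `m(𝐚)` be the least natural
number `m` with `∑_{k=0}^{N-1} (a k / a N) ^ m < 1`, and let `δ > 0`. If `f` is
`m(𝐚)`-times continuously differentiable on `[0, δ]` and satisfies
`f x + f (a 1 * x) + ⋯ + f (a N * x) = 0` whenever `{x, a 1 * x, …, a N * x} ⊆ [0, δ]`,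
then `f` vanishes identically on `[0, δ]`. -/
theorem stmt_0 (N : ℕ) (hN : 1 ≤ N) (a : ℕ → ℝ) (ha0 : a 0 = 1)
    (hmono : ∀ k, k < N → a k < a (k + 1)) (δ : ℝ) (hδ : 0 < δ) (f : ℝ → ℝ)
    (hf : ContDiffOn ℝ
      ((sInf {m : ℕ | ∑ k ∈ Finset.range N, (a k / a N) ^ m < 1} : ℕ) : ℕ∞)
      f (Set.Icc 0 δ))
    (heq : ∀ x : ℝ, (∀ k ≤ N, a k * x ∈ Set.Icc 0 δ) →
      ∑ k ∈ Finset.range (N + 1), f (a k * x) = 0) :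
    ∀ x ∈ Set.Icc 0 δ, f x = 0 :=
  stmt_0_general N a ha0 hmono δ hδ f hf heq
end

section
/- Let N ≥ 1, let a_0 = 1 < a_1 < a_2 < ⋯ < a_N be real numbers, let m(𝐚) be the least natural number m such that ∑_{k=0}^{N-1} (a_k/a_N)^m < 1, and let δ > 0. If f : [-δ,0] → ℝ is m(𝐚)-times continuously differentiable on [-δ,0] and satisfies f(x) + f(a_1 x) + ⋯ + f(a_N x) = 0 for every x such that {x, a_1 x, …, a_N x} ⊆ [-δ,0], then f is identically zero on [-δ,0]. -/
/-!
With `b k = a k / a N ∈ (0, 1]` and `M = m(a)`, the reflection `x ↦ -x` turns the equation into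
`f x + ∑ k < N, f (b k * x) = 0` on `[0, δ]`. Taylor's theorem gives `f = P + O(x ^ M)` there with
`deg P < M`. Substituting into the equation, the polynomial `P x + ∑ k, P (b k * x)`, whose `j`-th
coefficient is `c j * (1 + ∑ k, b k ^ j)`, is `O(x ^ M)` at `0`, so `P = 0` and `|f x| ≤ C x ^ M`.
The equation then improves `C` to `q C` with `q = ∑ k, b k ^ M < 1`, hence `f = 0`.
-/

open Finset Set Filter Asymptotics Topology
open scoped Nat

theorem coeff_eq_zero_of_isBigO_pow {l : Filter ℝ} [l.NeBot] (hl : l ≤ 𝓝[≠] 0) :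
    ∀ {m : ℕ} {c : ℕ → ℝ}, (fun x => ∑ j ∈ range m, c j * x ^ j) =O[l] (· ^ m) →
      ∀ j < m, c j = 0
  | 0, _, _ => by simp
  | m + 1, c, h => by
    have hsplit : ∀ x : ℝ,
        ∑ j ∈ range (m + 1), c j * x ^ j = c 0 + x * ∑ j ∈ range m, c (j + 1) * x ^ j := by
      intro x
      rw [sum_range_succ', mul_sum, add_comm]
      simp only [pow_zero, mul_one, pow_succ]
      congr 1
      exact sum_congr rfl fun j _ => by ring
    have hl0 : l ≤ 𝓝 0 := hl.trans nhdsWithin_le_nhds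
    have hc0 : c 0 = 0 := by
      have hlim : Tendsto (fun x : ℝ => ∑ j ∈ range (m + 1), c j * x ^ j) l (𝓝 (c 0)) := by
        have := ((continuous_finsetSum _ fun j _ => by fun_prop :
          Continuous fun x : ℝ => ∑ j ∈ range (m + 1), c j * x ^ j).tendsto 0).mono_left hl0
        simpa [sum_range_succ'] using this
      have hlim0 : Tendsto (fun x : ℝ => x ^ (m + 1)) l (𝓝 0) := by
        simpa using ((continuous_pow (m + 1)).tendsto (0 : ℝ)).mono_left hl0
      exact tendsto_nhds_unique hlim (h.trans_tendsto hlim0)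
    have htail : (fun x => ∑ j ∈ range m, c (j + 1) * x ^ j) =O[l] (· ^ m) := by
      have hne : ∀ᶠ x in l, x ≠ 0 := hl self_mem_nhdsWithin
      refine ((isBigO_refl (fun x : ℝ => x⁻¹) l).mul h).congr' ?_ ?_
      · filter_upwards [hne] with x hx
        rw [hsplit, hc0, zero_add, inv_mul_cancel_left₀ hx]
      · filter_upwards [hne] with x hx
        rw [pow_succ', inv_mul_cancel_left₀ hx]
    rintro (_ | j) hj
    · exact hc0
    · exact coeff_eq_zero_of_isBigO_pow hl htail j (by omega)

theorem exists_abs_sub_sum_le_of_contDiffOn {f : ℝ → ℝ} {a b : ℝ} (hab : a < b) {n : ℕ}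
    (hf : ContDiffOn ℝ n f (Icc a b)) :
    ∃ (c : ℕ → ℝ) (C : ℝ), ∀ x ∈ Icc a b,
      |f x - ∑ j ∈ range n, c j * (x - a) ^ j| ≤ C * (x - a) ^ n := by
  cases n with
  | zero =>
    obtain ⟨C, hC⟩ := isCompact_Icc.exists_bound_of_continuousOn hf.continuousOn
    exact ⟨0, C, by simpa using hC⟩
  | succ n =>
    obtain ⟨C, hC⟩ := isCompact_Icc.exists_bound_of_continuousOn
      (hf.continuousOn_iteratedDerivWithin le_rfl (uniqueDiffOn_Icc hab))
    refine ⟨fun j => (j ! : ℝ)⁻¹ * iteratedDerivWithin j f (Icc a b) a, C / n !,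
      fun x hx => ?_⟩
    have := taylor_mean_remainder_bound hab.le (by exact_mod_cast hf) hx hC
    rw [taylor_within_apply] at this
    have hsum : ∑ j ∈ range (n + 1), (j ! : ℝ)⁻¹ * iteratedDerivWithin j f (Icc a b) a * (x - a) ^ j
        = ∑ j ∈ range (n + 1), ((j ! : ℝ)⁻¹ * (x - a) ^ j) • iteratedDerivWithin j f (Icc a b) a :=
      sum_congr rfl fun j _ => by rw [smul_eq_mul]; ring
    rw [hsum, ← Real.norm_eq_abs, div_mul_eq_mul_div]
    exact this

theorem tendsto_sum_pow_atTop_nhds_zero {N : ℕ} {r : ℕ → ℝ} (h0 : ∀ k < N, 0 ≤ r k)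
    (h1 : ∀ k < N, r k < 1) :
    Tendsto (fun m => ∑ k ∈ range N, r k ^ m) atTop (𝓝 0) := by
  simpa using tendsto_finsetSum (range N) fun k hk =>
    tendsto_pow_atTop_nhds_zero_of_lt_one (h0 k (mem_range.1 hk)) (h1 k (mem_range.1 hk))

section ScaledSum

variable {N M : ℕ} {b : ℕ → ℝ} {s : Set ℝ} {f : ℝ → ℝ}

theorem abs_le_sum_pow_mul_of_add_sum_eq_zero (hs : ∀ x ∈ s, ∀ k < N, b k * x ∈ s)
    (hb : ∀ k < N, 0 ≤ b k) (heq : ∀ x ∈ s, f x + ∑ k ∈ range N, f (b k * x) = 0) {C : ℝ}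
    (hC : ∀ x ∈ s, |f x| ≤ C * |x| ^ M) :
    ∀ x ∈ s, |f x| ≤ (∑ k ∈ range N, b k ^ M) * C * |x| ^ M := by
  intro x hx
  calc |f x| = |∑ k ∈ range N, f (b k * x)| := by
        rw [eq_neg_of_add_eq_zero_left (heq x hx), abs_neg]
    _ ≤ ∑ k ∈ range N, |f (b k * x)| := abs_sum_le_sum_abs _ _
    _ ≤ ∑ k ∈ range N, C * |b k * x| ^ M :=
        sum_le_sum fun k hk => hC _ (hs x hx k (mem_range.1 hk))
    _ = (∑ k ∈ range N, b k ^ M) * C * |x| ^ M := by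
        rw [sum_mul, sum_mul]
        refine sum_congr rfl fun k hk => ?_
        rw [abs_mul, abs_of_nonneg (hb k (mem_range.1 hk)), mul_pow]
        ring

theorem eq_zero_of_abs_le_mul_pow (hs : ∀ x ∈ s, ∀ k < N, b k * x ∈ s)
    (hb : ∀ k < N, 0 ≤ b k) (hq : ∑ k ∈ range N, b k ^ M < 1)
    (heq : ∀ x ∈ s, f x + ∑ k ∈ range N, f (b k * x) = 0) {C : ℝ}
    (hC : ∀ x ∈ s, |f x| ≤ C * |x| ^ M) :
    ∀ x ∈ s, f x = 0 := by
  set q := ∑ k ∈ range N, b k ^ M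
  have hq0 : 0 ≤ q := sum_nonneg fun k hk => pow_nonneg (hb k (mem_range.1 hk)) M
  have hiter : ∀ p : ℕ, ∀ x ∈ s, |f x| ≤ q ^ p * C * |x| ^ M := by
    intro p
    induction p with
    | zero => simpa using hC
    | succ p ih =>
      simpa only [pow_succ', mul_assoc] using abs_le_sum_pow_mul_of_add_sum_eq_zero hs hb heq ih
  intro x hx
  have hlim : Tendsto (fun p => q ^ p * C * |x| ^ M) atTop (𝓝 0) := by
    simpa [mul_assoc] using (tendsto_pow_atTop_nhds_zero_of_lt_one hq0 hq).mul_const (C * |x| ^ M)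
  exact abs_nonpos_iff.1 (ge_of_tendsto' hlim fun p => hiter p x hx)

theorem coeff_eq_zero_of_abs_sub_sum_le {l : Filter ℝ} [l.NeBot] (hl : l ≤ 𝓝[≠] 0)
    (hsl : s ∈ l) (hs : ∀ x ∈ s, ∀ k < N, b k * x ∈ s) (hb : ∀ k < N, 0 ≤ b k)
    (heq : ∀ x ∈ s, f x + ∑ k ∈ range N, f (b k * x) = 0) {c : ℕ → ℝ} {C : ℝ}
    (hP : ∀ x ∈ s, |f x - ∑ j ∈ range M, c j * x ^ j| ≤ C * |x| ^ M) :
    ∀ j < M, c j = 0 := by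
  set P : ℝ → ℝ := fun x => ∑ j ∈ range M, c j * x ^ j
  have hPsum : ∀ x, P x + ∑ k ∈ range N, P (b k * x)
      = ∑ j ∈ range M, c j * (1 + ∑ k ∈ range N, b k ^ j) * x ^ j := by
    intro x
    simp only [P, mul_pow, mul_add, mul_one, mul_sum, add_mul, sum_mul, sum_add_distrib]
    rw [sum_comm]
    congr 1
    exact sum_congr rfl fun _ _ => sum_congr rfl fun _ _ => by ring
  have hbound : ∀ x ∈ s, |P x + ∑ k ∈ range N, P (b k * x)|
      ≤ C * (1 + ∑ k ∈ range N, b k ^ M) * |x| ^ M := by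
    intro x hx
    have hdiff : P x + ∑ k ∈ range N, P (b k * x)
        = -((f x - P x) + ∑ k ∈ range N, (f (b k * x) - P (b k * x))) := by
      rw [sum_sub_distrib]
      linear_combination heq x hx
    calc |P x + ∑ k ∈ range N, P (b k * x)|
        ≤ |f x - P x| + ∑ k ∈ range N, |f (b k * x) - P (b k * x)| := by
          rw [hdiff, abs_neg]
          exact (abs_add_le _ _).trans (add_le_add_right (abs_sum_le_sum_abs _ _) _)
      _ ≤ C * |x| ^ M + ∑ k ∈ range N, C * |b k * x| ^ M :=
          add_le_add (hP x hx) (sum_le_sum fun k hk => hP _ (hs x hx k (mem_range.1 hk)))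
      _ = C * (1 + ∑ k ∈ range N, b k ^ M) * |x| ^ M := by
          rw [mul_add, add_mul, mul_one, mul_sum, sum_mul]
          congr 1
          refine sum_congr rfl fun k hk => ?_
          rw [abs_mul, abs_of_nonneg (hb k (mem_range.1 hk)), mul_pow, mul_assoc]
  have hO : (fun x => ∑ j ∈ range M, c j * (1 + ∑ k ∈ range N, b k ^ j) * x ^ j)
      =O[l] (· ^ M) :=
    IsBigO.of_bound _ <| eventually_of_mem hsl fun x hx => by
      simpa only [← hPsum, Real.norm_eq_abs, abs_pow] using hbound x hx
  intro j hj
  have hpos : 0 < 1 + ∑ k ∈ range N, b k ^ j :=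
    add_pos_of_pos_of_nonneg one_pos (sum_nonneg fun k hk => pow_nonneg (hb k (mem_range.1 hk)) j)
  exact (mul_eq_zero.1 (coeff_eq_zero_of_isBigO_pow hl hO j hj)).resolve_right hpos.ne'

theorem eq_zero_of_contDiffOn_of_add_sum_eq_zero {δ : ℝ} (hδ : 0 < δ) (hb0 : ∀ k < N, 0 ≤ b k)
    (hb1 : ∀ k < N, b k ≤ 1) (hq : ∑ k ∈ range N, b k ^ M < 1)
    (hf : ContDiffOn ℝ M f (Icc 0 δ))
    (heq : ∀ x ∈ Icc 0 δ, f x + ∑ k ∈ range N, f (b k * x) = 0) :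
    ∀ x ∈ Icc 0 δ, f x = 0 := by
  have hs : ∀ x ∈ Icc 0 δ, ∀ k < N, b k * x ∈ Icc 0 δ := fun x hx k hk =>
    ((convex_Icc 0 δ).starConvex (left_mem_Icc.2 hδ.le)).smul_mem hx (hb0 k hk) (hb1 k hk)
  obtain ⟨c, C, hP⟩ := exists_abs_sub_sum_le_of_contDiffOn hδ hf
  have hP' : ∀ x ∈ Icc 0 δ, |f x - ∑ j ∈ range M, c j * x ^ j| ≤ C * |x| ^ M :=
    fun x hx => by simpa [abs_of_nonneg hx.1] using hP x hx
  have hc := coeff_eq_zero_of_abs_sub_sum_le (nhdsGT_le_nhdsNE 0) (Icc_mem_nhdsGT hδ) hs hb0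
    heq hP'
  refine eq_zero_of_abs_le_mul_pow hs hb0 hq heq (C := C) fun x hx => ?_
  have hzero : ∑ j ∈ range M, c j * x ^ j = 0 :=
    sum_eq_zero fun j hj => by rw [hc j (mem_range.1 hj), zero_mul]
  simpa [hzero] using hP' x hx

theorem eq_zero_of_contDiffOn_Icc_neg_of_add_sum_eq_zero {δ : ℝ} (hδ : 0 < δ)
    (hb0 : ∀ k < N, 0 ≤ b k) (hb1 : ∀ k < N, b k ≤ 1) (hq : ∑ k ∈ range N, b k ^ M < 1)
    (hf : ContDiffOn ℝ M f (Icc (-δ) 0))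
    (heq : ∀ x ∈ Icc (-δ) 0, f x + ∑ k ∈ range N, f (b k * x) = 0) :
    ∀ x ∈ Icc (-δ) 0, f x = 0 := by
  have hneg : ∀ {y}, y ∈ Icc 0 δ → -y ∈ Icc (-δ) 0 := fun hy =>
    ⟨neg_le_neg hy.2, neg_nonpos.2 hy.1⟩
  have hrefl := eq_zero_of_contDiffOn_of_add_sum_eq_zero (f := fun y => f (-y)) hδ hb0 hb1 hq
    (hf.comp contDiff_neg.contDiffOn fun y hy => hneg hy) fun y hy => by
      simpa only [mul_neg] using heq (-y) (hneg hy)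
  intro x hx
  simpa using hrefl (-x) ⟨neg_nonneg.2 hx.2, neg_le.1 hx.1⟩

end ScaledSum

theorem stmt_1_general (N : ℕ) (a : ℕ → ℝ) (ha0 : a 0 = 1)
    (hmono : ∀ k, k < N → a k < a (k + 1)) (δ : ℝ) (hδ : 0 < δ) (f : ℝ → ℝ)
    (hf : ContDiffOn ℝ
      ((sInf {m : ℕ | ∑ k ∈ Finset.range N, (a k / a N) ^ m < 1} : ℕ) : ℕ∞)
      f (Set.Icc (-δ) 0))
    (heq : ∀ x : ℝ, (∀ k ≤ N, a k * x ∈ Set.Icc (-δ) 0) →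
      ∑ k ∈ Finset.range (N + 1), f (a k * x) = 0) :
    ∀ x ∈ Set.Icc (-δ) 0, f x = 0 := by
  set M := sInf {m : ℕ | ∑ k ∈ Finset.range N, (a k / a N) ^ m < 1}
  have ha : StrictMonoOn a (Set.Iic N) := strictMonoOn_Iic_of_lt_succ hmono
  have hpos : ∀ k ≤ N, 0 < a k := fun k hk =>
    zero_lt_one.trans_le (ha0 ▸ ha.monotoneOn (Nat.zero_le N) hk (Nat.zero_le k))
  have haN : 0 < a N := hpos N le_rfl
  have hb0 : ∀ k ≤ N, 0 ≤ a k / a N := fun k hk => (div_pos (hpos k hk) haN).le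
  have hb1 : ∀ k ≤ N, a k / a N ≤ 1 := fun k hk =>
    (div_le_one haN).2 (ha.monotoneOn hk Set.self_mem_Iic hk)
  have hM : ∑ k ∈ range N, (a k / a N) ^ M < 1 :=
    Nat.sInf_mem ((tendsto_sum_pow_atTop_nhds_zero (fun k hk => hb0 k hk.le)
      fun k hk => (div_lt_one haN).2 (ha hk.le Set.self_mem_Iic hk)).eventually
        (gt_mem_nhds one_pos)).exists
  have hmem : ∀ x ∈ Icc (-δ) 0, ∀ k ≤ N, a k / a N * x ∈ Icc (-δ) 0 := fun x hx k hk =>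
    ((convex_Icc (-δ) 0).starConvex (right_mem_Icc.2 (neg_nonpos.2 hδ.le))).smul_mem hx
      (hb0 k hk) (hb1 k hk)
  refine eq_zero_of_contDiffOn_Icc_neg_of_add_sum_eq_zero hδ (fun k hk => hb0 k hk.le)
    (fun k hk => hb1 k hk.le) hM hf fun x hx => ?_
  have hscale : ∀ k, a k * (x / a N) = a k / a N * x := fun k => by ring
  have h := heq (x / a N) fun k hk => hscale k ▸ hmem x hx k hk
  rw [sum_range_succ] at h
  simp only [hscale, div_self haN.ne', one_mul] at h
  linarith

/-- Same as Statement 0 but on the interval `[-δ, 0]`. -/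
theorem stmt_1 (N : ℕ) (hN : 1 ≤ N) (a : ℕ → ℝ) (ha0 : a 0 = 1)
    (hmono : ∀ k, k < N → a k < a (k + 1)) (δ : ℝ) (hδ : 0 < δ) (f : ℝ → ℝ)
    (hf : ContDiffOn ℝ
      ((sInf {m : ℕ | ∑ k ∈ Finset.range N, (a k / a N) ^ m < 1} : ℕ) : ℕ∞)
      f (Set.Icc (-δ) 0))
    (heq : ∀ x : ℝ, (∀ k ≤ N, a k * x ∈ Set.Icc (-δ) 0) →
      ∑ k ∈ Finset.range (N + 1), f (a k * x) = 0) :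
    ∀ x ∈ Set.Icc (-δ) 0, f x = 0 :=
  stmt_1_general N a ha0 hmono δ hδ f hf heq
end

section
/- Let N ≥ 2 and let α = a + ib be a complex number such that G_N(α) = 1·^α-sum vanishes, i.e. ∑_{k=1}^N k^α = 0 (where k^α = exp(α log k)). Define f̃_α : ℝ → ℝ by f̃_α(x) = Re(|x|^α) = Re(exp(α log|x|)) for x < 0 and f̃_α(x) = 0 for x ≥ 0. Then f̃_α satisfies ∑_{k=1}^N f̃_α(kx) = 0 for all x ∈ ℝ, f̃_α is infinitely differentiable on ℝ \ {0}, and if a = Re(α) > 0 then f̃_α is continuous on ℝ. In particular, the zero function on [0,∞) extends to a solution on ℝ of f(x) + f(2x) + ⋯ + f(Nx) = 0 that does not vanish identically. -/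
/-!
For `x < 0` and `c > 0` one has `|c x|^α = c^α |x|^α`, so `∑ f(k x) = Re (G_N(α) |x|^α) = 0`;
for `x ≥ 0` every term vanishes. Away from `0` the function is locally `Re(|x|^α)` or `0`,
both smooth, and at `0` continuity comes from `Re(|x|^α) → 0^α = 0` when `Re α > 0`.
-/

open Complex Filter Topology

noncomputable section

def reCpowOnNeg (α : ℂ) (x : ℝ) : ℝ :=
  if x < 0 then (((|x| : ℝ) : ℂ) ^ α).re else 0

lemma reCpowOnNeg_of_nonneg (α : ℂ) {x : ℝ} (hx : 0 ≤ x) : reCpowOnNeg α x = 0 :=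
  if_neg hx.not_gt

lemma reCpowOnNeg_const_mul {α : ℂ} {c x : ℝ} (hc : 0 < c) (hx : x < 0) :
    reCpowOnNeg α (c * x) = ((c : ℂ) ^ α * ((|x| : ℝ) : ℂ) ^ α).re := by
  rw [reCpowOnNeg, if_pos (mul_neg_of_pos_of_neg hc hx), abs_mul, abs_of_pos hc, ofReal_mul,
    mul_cpow_ofReal_nonneg hc.le (abs_nonneg x)]

theorem sum_reCpowOnNeg_mul_eq_zero {ι : Type*} {s : Finset ι} {c : ι → ℝ} {α : ℂ}
    (hc : ∀ i ∈ s, 0 < c i) (hα : ∑ i ∈ s, (c i : ℂ) ^ α = 0) (x : ℝ) :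
    ∑ i ∈ s, reCpowOnNeg α (c i * x) = 0 := by
  rcases lt_or_ge x 0 with hx | hx
  · rw [Finset.sum_congr rfl fun i hi => reCpowOnNeg_const_mul (hc i hi) hx, ← re_sum,
      ← Finset.sum_mul, hα, zero_mul, zero_re]
  · exact Finset.sum_eq_zero fun i hi => reCpowOnNeg_of_nonneg α (mul_nonneg (hc i hi).le hx)

lemma contDiffAt_ofReal_cpow_const {x : ℝ} (hx : 0 < x) (α : ℂ) {n : WithTop ℕ∞} :
    ContDiffAt ℝ n (fun y : ℝ => (y : ℂ) ^ α) x := by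
  have hslit : (x : ℂ) ∈ slitPlane := ofReal_mem_slitPlane.mpr hx
  have hcpow : ContDiffAt ℂ n (fun z : ℂ => z ^ α) x :=
    (analyticAt_id.cpow analyticAt_const hslit).contDiffAt
  exact (hcpow.restrict_scalars ℝ).comp x ofRealCLM.contDiff.contDiffAt

theorem contDiffOn_reCpowOnNeg (α : ℂ) {n : WithTop ℕ∞} :
    ContDiffOn ℝ n (reCpowOnNeg α) {0}ᶜ := by
  intro x hx
  refine ContDiffAt.contDiffWithinAt ?_
  rcases lt_or_gt_of_ne (hx : x ≠ 0) with hneg | hpos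
  · have hsmooth : ContDiffAt ℝ n (fun y : ℝ => (((-y : ℝ) : ℂ) ^ α).re) x :=
      reCLM.contDiff.contDiffAt.comp x <|
        (contDiffAt_ofReal_cpow_const (neg_pos.mpr hneg) α).comp x contDiffAt_id.neg
    refine hsmooth.congr_of_eventuallyEq ?_
    filter_upwards [Iio_mem_nhds hneg] with y (hy : y < 0)
    rw [reCpowOnNeg, if_pos hy, abs_of_neg hy]
  · refine (contDiffAt_const (c := (0 : ℝ))).congr_of_eventuallyEq ?_
    filter_upwards [Ioi_mem_nhds hpos] with y hy using reCpowOnNeg_of_nonneg α (le_of_lt hy)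

lemma continuous_re_abs_cpow {α : ℂ} (ha : 0 < α.re) :
    Continuous fun y : ℝ => (((|y| : ℝ) : ℂ) ^ α).re :=
  continuous_re.comp <| (continuous_iff_continuousAt.mpr fun y =>
    continuousAt_ofReal_cpow_const y α (Or.inl ha)).comp continuous_abs

theorem continuous_reCpowOnNeg {α : ℂ} (ha : 0 < α.re) : Continuous (reCpowOnNeg α) := by
  have hα : α ≠ 0 := fun h => by simp [h] at ha
  have hpiece : reCpowOnNeg α =
      fun x => if (0 : ℝ) ≤ x then (0 : ℝ) else (((|x| : ℝ) : ℂ) ^ α).re := by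
    ext x
    simp only [reCpowOnNeg, ← not_le, ite_not]
  rw [hpiece]
  refine Continuous.if_le continuous_const (continuous_re_abs_cpow ha) continuous_const
    continuous_id fun x hx => ?_
  simp [← hx, zero_cpow hα]

lemma reCpowOnNeg_neg_one (α : ℂ) : reCpowOnNeg α (-1) = 1 := by
  simp [reCpowOnNeg]

end

theorem stmt_3_general (N : ℕ) (α : ℂ)
    (hα : ∑ k ∈ Finset.Icc 1 N, (k : ℂ) ^ α = 0)
    (f : ℝ → ℝ)
    (hf : f = fun x : ℝ => if x < 0 then (((|x| : ℝ) : ℂ) ^ α).re else 0) :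
    (∀ x : ℝ, ∑ k ∈ Finset.Icc 1 N, f (k * x) = 0) ∧
    ContDiffOn ℝ (⊤ : ℕ∞) f ({(0 : ℝ)}ᶜ) ∧
    (0 < α.re → Continuous f) ∧
    f ≠ 0 := by
  obtain rfl : f = reCpowOnNeg α := hf
  have hpos : ∀ k ∈ Finset.Icc 1 N, (0 : ℝ) < k := fun k hk => by
    exact_mod_cast (Finset.mem_Icc.mp hk).1
  refine ⟨sum_reCpowOnNeg_mul_eq_zero hpos (by simpa using hα), contDiffOn_reCpowOnNeg α,
    continuous_reCpowOnNeg, fun h => ?_⟩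
  simpa [reCpowOnNeg_neg_one] using congrFun h (-1)

/-- If `N ≥ 2` and `α ∈ ℂ` is a zero of `G_N(z) = ∑_{k=1}^N k^z`, then the
function `f̃_α(x) = Re(|x|^α)` for `x < 0`, `f̃_α(x) = 0` for `x ≥ 0`, solves
`∑_{k=1}^N f̃_α(k x) = 0` on `ℝ`, is `C^∞` on `ℝ \ {0}`, is continuous on `ℝ` whenever
`Re α > 0`, and does not vanish identically. -/
theorem stmt_3 (N : ℕ) (hN : 2 ≤ N) (α : ℂ)
    (hα : ∑ k ∈ Finset.Icc 1 N, (k : ℂ) ^ α = 0)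
    (f : ℝ → ℝ)
    (hf : f = fun x : ℝ => if x < 0 then (((|x| : ℝ) : ℂ) ^ α).re else 0) :
    (∀ x : ℝ, ∑ k ∈ Finset.Icc 1 N, f (k * x) = 0) ∧
    ContDiffOn ℝ (⊤ : ℕ∞) f ({(0 : ℝ)}ᶜ) ∧
    (0 < α.re → Continuous f) ∧
    f ≠ 0 :=
  stmt_3_general N α hα f hf
end

section
/- Let N ≥ 1 and let 0 < b_1 < b_2 < ⋯ < b_N be real numbers. Suppose g : [0, b_N] → ℝ is continuous and satisfies g(w) + g(w + b_1) + ⋯ + g(w + b_N) = 0 whenever {w, w + b_1, …, w + b_N} ⊆ [0, b_N]. Then there exists a unique continuous function g̃ : ℝ → ℝ such that g̃(w) + g̃(w + b_1) + ⋯ + g̃(w + b_N) = 0 for all w ∈ ℝ and g̃ agrees with g on [0, b_N]. -/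
/-!
Write the equation as `F (w + e i₀) = -∑ i ∈ s.erase i₀, F (w + e i)`, where `e i₀` is the
largest shift. Every other shifted point lies at least `h := min (e i₀ - e i) > 0` to the left of
`w + e i₀`, so the values on `[m, M]` determine a solution on `[m, ∞)`, block by block of
length `h`; induction over these blocks gives existence, uniqueness and continuity. Continuity
across `M` holds because the equation with top point `M` only involves points of `[m, M]`, where
it is part of the data. The smallest shift plays the same role to the left, through the
reflection `x ↦ -x`. In the theorem the shifts are `0 < b 1 < ⋯ < b N`; the shift `0` of the
leading term is encoded as `Function.update b 0 0`, since `b 0` itself is arbitrary.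
-/

open Set Pointwise Topology Function

theorem forall_of_forall_le_of_step {P : ℝ → Prop} {c h : ℝ} (hh : 0 < h)
    (base : ∀ x ≤ c, P x) (step : ∀ x, c < x → (∀ y ≤ x - h, P y) → P x) (x : ℝ) :
    P x := by
  have key : ∀ n : ℕ, ∀ x ≤ c + n * h, P x := by
    intro n
    induction n with
    | zero => simpa using base
    | succ n ih =>
      intro x hx
      rcases le_or_gt x c with hxc | hxc
      · exact base x hxc
      · exact step x hxc fun y hy => ih y (by push_cast at hx; linarith)
  obtain ⟨n, hn⟩ := exists_nat_ge ((x - c) / h)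
  exact key n x (by rw [div_le_iff₀ hh] at hn; linarith)

theorem Finset.exists_pos_forall_add_le {ι : Type*} {t : Finset ι} {e : ι → ℝ} {a : ℝ}
    (h : ∀ i ∈ t, e i < a) : ∃ δ > 0, ∀ i ∈ t, e i + δ ≤ a := by
  have : ∀ᶠ δ in 𝓝[>] (0 : ℝ), ∀ i ∈ t, e i + δ ≤ a :=
    (Filter.eventually_all_finset t).2 fun i hi =>
      nhdsWithin_le_nhds ((gt_mem_nhds (sub_pos.2 (h i hi))).mono fun δ hδ => by linarith)
  exact (this.and self_mem_nhdsWithin).exists.imp fun δ hδ => ⟨hδ.2, hδ.1⟩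

namespace ShiftEquation

variable {ι : Type*} {s : Finset ι} {e : ι → ℝ}

def SolvesOn (s : Finset ι) (e : ι → ℝ) (F : ℝ → ℝ) (I : Set ℝ) : Prop :=
  ∀ w, (∀ i ∈ s, w + e i ∈ I) → ∑ i ∈ s, F (w + e i) = 0

theorem SolvesOn.congr {F G : ℝ → ℝ} {I : Set ℝ} (hF : SolvesOn s e F I) (hFG : EqOn F G I) :
    SolvesOn s e G I := fun w hw => by
  rw [← hF w hw]
  exact Finset.sum_congr rfl fun i hi => (hFG (hw i hi)).symm

theorem SolvesOn.comp_neg {F : ℝ → ℝ} {I : Set ℝ} (hF : SolvesOn s e F I) :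
    SolvesOn s (-e) (fun x => F (-x)) (-I) := fun w hw => by
  have hneg : ∀ i, -(w + (-e) i) = -w + e i := fun i => by simp only [Pi.neg_apply]; ring
  simp only [hneg]
  exact hF (-w) fun i hi => hneg i ▸ Set.mem_neg.1 (hw i hi)

theorem solvesOn_univ {F : ℝ → ℝ} : SolvesOn s e F univ ↔ ∀ w, ∑ i ∈ s, F (w + e i) = 0 := by
  simp [SolvesOn]

theorem SolvesOn.univ_of_Iic_of_Ici {F : ℝ → ℝ} {m M : ℝ}
    (hspread : ∀ i ∈ s, ∀ j ∈ s, e i - e j ≤ M - m) (hM : SolvesOn s e F (Iic M))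
    (hm : SolvesOn s e F (Ici m)) : SolvesOn s e F univ := fun w _ => by
  by_cases hle : ∀ i ∈ s, w + e i ∈ Iic M
  · exact hM w hle
  · push Not at hle
    obtain ⟨j, hj, hjM⟩ := hle
    exact hm w fun i hi => by
      simp only [mem_Iic, not_le, mem_Ici] at hjM ⊢
      linarith [hspread j hj i hi]

variable [DecidableEq ι] {i₀ : ι}

theorem sum_eq_zero_iff_eq_neg (hi₀ : i₀ ∈ s) (F : ℝ → ℝ) (w : ℝ) :
    ∑ i ∈ s, F (w + e i) = 0 ↔ F (w + e i₀) = -∑ i ∈ s.erase i₀, F (w + e i) := by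
  rw [← Finset.add_sum_erase s _ hi₀, eq_neg_iff_add_eq_zero]

theorem le_of_forall_erase_lt (hmax : ∀ i ∈ s.erase i₀, e i < e i₀) {i : ι} (hi : i ∈ s) :
    e i ≤ e i₀ := by
  rcases eq_or_ne i i₀ with rfl | hne
  exacts [le_rfl, (hmax i (Finset.mem_erase.2 ⟨hne, hi⟩)).le]

theorem sub_le_sub_of_extreme {j₀ : ι} (hmax : ∀ i ∈ s.erase i₀, e i < e i₀)
    (hmin : ∀ i ∈ s.erase j₀, e j₀ < e i) {i j : ι} (hi : i ∈ s) (hj : j ∈ s) :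
    e i - e j ≤ e i₀ - e j₀ := by
  have hj' := le_of_forall_erase_lt (e := -e) (by simpa using hmin) hj
  simp only [Pi.neg_apply, neg_le_neg_iff] at hj'
  linarith [le_of_forall_erase_lt hmax hi]

section Right

variable {m c : ℝ}

theorem eqOn_Ici_of_eqOn_Icc (hi₀ : i₀ ∈ s) (hmax : ∀ i ∈ s.erase i₀, e i < e i₀)
    (hspan : ∀ i ∈ s, e i₀ - e i ≤ c - m) {F₁ F₂ : ℝ → ℝ}
    (h₁ : ∀ w, c < w + e i₀ → ∑ i ∈ s, F₁ (w + e i) = 0)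
    (h₂ : ∀ w, c < w + e i₀ → ∑ i ∈ s, F₂ (w + e i) = 0) (hc : EqOn F₁ F₂ (Icc m c)) :
    EqOn F₁ F₂ (Ici m) := by
  obtain ⟨h, hh, hgap⟩ := Finset.exists_pos_forall_add_le hmax
  intro x hx
  refine forall_of_forall_le_of_step (P := fun x => m ≤ x → F₁ x = F₂ x) hh
    (fun x hxc hmx => hc ⟨hmx, hxc⟩) (fun x hcx ih _ => ?_) x hx
  have hw : c < x - e i₀ + e i₀ := by simpa using hcx
  have hrec₁ := (sum_eq_zero_iff_eq_neg hi₀ F₁ _).1 (h₁ _ hw)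
  have hrec₂ := (sum_eq_zero_iff_eq_neg hi₀ F₂ _).1 (h₂ _ hw)
  rw [sub_add_cancel] at hrec₁ hrec₂
  rw [hrec₁, hrec₂]
  congr 1
  refine Finset.sum_congr rfl fun i hi => ih _ ?_ ?_
  · linarith [hgap i hi]
  · linarith [hspan i (Finset.mem_of_mem_erase hi)]

theorem continuousOn_Ici_of_continuousOn_Icc (hi₀ : i₀ ∈ s)
    (hmax : ∀ i ∈ s.erase i₀, e i < e i₀)
    (hspan : ∀ i ∈ s, e i₀ - e i ≤ c - m) {F : ℝ → ℝ}
    (hF : ∀ w, c ≤ w + e i₀ → ∑ i ∈ s, F (w + e i) = 0) (hcont : ContinuousOn F (Icc m c)) :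
    ContinuousOn F (Ici m) := by
  obtain ⟨h, hh, hgap⟩ := Finset.exists_pos_forall_add_le hmax
  have hIcc : ∀ T, ContinuousOn F (Icc m T) := by
    refine forall_of_forall_le_of_step hh (fun T hT => hcont.mono (Icc_subset_Icc_right hT))
      fun T hcT ih => ?_
    have hrec : EqOn (fun x => -∑ i ∈ s.erase i₀, F (x - e i₀ + e i)) F (Icc c T) :=
      fun x hx => by
        simpa using ((sum_eq_zero_iff_eq_neg hi₀ F (x - e i₀)).1 (hF _ (by simpa using hx.1))).symm
    have hright : ContinuousOn F (Icc c T) := by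
      refine (ContinuousOn.neg (continuousOn_finsetSum _ fun i hi =>
        (ih (T - h) le_rfl).comp (by fun_prop) fun x hx => ⟨?_, ?_⟩)).congr hrec.symm
      · linarith [hx.1, hspan i (Finset.mem_of_mem_erase hi)]
      · linarith [hx.2, hgap i hi]
    exact (hcont.union_of_isClosed hright isClosed_Icc isClosed_Icc).mono
      Icc_subset_Icc_union_Icc
  intro x hx
  refine ((hIcc (x + 1)) x ⟨hx, by linarith⟩).mono_of_mem_nhdsWithin ?_
  rw [← Ici_inter_Iic]
  exact inter_mem_nhdsWithin _ (Iic_mem_nhds (by linarith))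

variable (s e i₀) in
noncomputable def extendIter (c h : ℝ) (f : ℝ → ℝ) : ℕ → ℝ → ℝ
  | 0 => f
  | n + 1 => fun x => if x ≤ c + n * h then extendIter c h f n x
      else -∑ i ∈ s.erase i₀, extendIter c h f n (x - e i₀ + e i)

variable {h : ℝ} {f : ℝ → ℝ}

theorem extendIter_succ_of_gt {n : ℕ} {x : ℝ} (hx : c + n * h < x) :
    extendIter s e i₀ c h f (n + 1) x =
      -∑ i ∈ s.erase i₀, extendIter s e i₀ c h f n (x - e i₀ + e i) := by
  simp [extendIter, not_le.2 hx]

theorem extendIter_eq_of_le (hh : 0 ≤ h) {n k : ℕ} (hnk : n ≤ k) {x : ℝ}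
    (hx : x ≤ c + n * h) :
    extendIter s e i₀ c h f k x = extendIter s e i₀ c h f n x := by
  induction k, hnk using Nat.le_induction with
  | base => rfl
  | succ k hnk ih =>
    have : x ≤ c + k * h := hx.trans (by gcongr)
    simp [extendIter, this, ih]

theorem extendIter_sum_eq_zero (hi₀ : i₀ ∈ s) (hh : 0 ≤ h)
    (hgap : ∀ i ∈ s.erase i₀, e i + h ≤ e i₀) (n : ℕ) {w : ℝ} (hcw : c < w + e i₀)
    (hwn : w + e i₀ ≤ c + n * h) : ∑ i ∈ s, extendIter s e i₀ c h f n (w + e i) = 0 := by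
  induction n with
  | zero => simp at hwn; linarith
  | succ n ih =>
    have hprev : ∀ i ∈ s.erase i₀, w + e i ≤ c + n * h := fun i hi => by
      push_cast at hwn; linarith [hgap i hi]
    rw [sum_eq_zero_iff_eq_neg hi₀, Finset.sum_congr rfl fun i hi =>
      extendIter_eq_of_le hh n.le_succ (hprev i hi)]
    rcases le_or_gt (w + e i₀) (c + n * h) with hwn' | hwn'
    · rw [extendIter_eq_of_le hh n.le_succ hwn']
      exact (sum_eq_zero_iff_eq_neg hi₀ _ _).1 (ih hwn')
    · simp [extendIter_succ_of_gt hwn']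

theorem exists_eqOn_Iic_extension (hi₀ : i₀ ∈ s) (hmax : ∀ i ∈ s.erase i₀, e i < e i₀) (c : ℝ)
    (f : ℝ → ℝ) :
    ∃ F, EqOn F f (Iic c) ∧ ∀ w, c < w + e i₀ → ∑ i ∈ s, F (w + e i) = 0 := by
  obtain ⟨h, hh, hgap⟩ := Finset.exists_pos_forall_add_le hmax
  set F := extendIter s e i₀ c h f
  have hceil : ∀ x, x ≤ c + ⌈(x - c) / h⌉₊ * h := fun x => by
    have := Nat.le_ceil ((x - c) / h)
    rw [div_le_iff₀ hh] at this
    linarith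
  have hglue : ∀ (n : ℕ) x, x ≤ c + n * h → F ⌈(x - c) / h⌉₊ x = F n x := fun n x hx => by
    rcases le_total ⌈(x - c) / h⌉₊ n with hk | hk
    · exact (extendIter_eq_of_le hh.le hk (hceil x)).symm
    · exact extendIter_eq_of_le hh.le hk hx
  refine ⟨fun x => F ⌈(x - c) / h⌉₊ x, fun x hx => hglue 0 x (by simpa using hx), fun w hw => ?_⟩
  obtain ⟨n, hn⟩ : ∃ n : ℕ, w + e i₀ ≤ c + n * h := ⟨_, hceil _⟩
  rw [Finset.sum_congr rfl fun i hi => hglue n _ (by linarith [le_of_forall_erase_lt hmax hi])]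
  exact extendIter_sum_eq_zero hi₀ hh.le hgap n hw hn

end Right

variable {m M : ℝ}

theorem exists_continuous_extension_Ici (hi₀ : i₀ ∈ s) (hmax : ∀ i ∈ s.erase i₀, e i < e i₀)
    (hspan : ∀ i ∈ s, e i₀ - e i ≤ M - m) {f : ℝ → ℝ} (hf : ContinuousOn f (Icc m M))
    (hsol : SolvesOn s e f (Icc m M)) :
    ∃ F, EqOn F f (Iic M) ∧ ContinuousOn F (Ici m) ∧ SolvesOn s e F (Ici m) := by
  obtain ⟨F, hFf, hFsol⟩ := exists_eqOn_Iic_extension hi₀ hmax M f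
  have hsolF : SolvesOn s e F (Ici m) := fun w hw => by
    rcases lt_or_ge M (w + e i₀) with hM | hM
    · exact hFsol w hM
    · refine (hsol.congr fun x hx => (hFf hx.2).symm) w fun i hi => ⟨hw i hi, ?_⟩
      linarith [le_of_forall_erase_lt hmax hi]
  have hFcont : ContinuousOn F (Ici m) :=
    continuousOn_Ici_of_continuousOn_Icc hi₀ hmax hspan
      (fun w hw => hsolF w fun i hi => show m ≤ w + e i by linarith [hspan i hi])
      (hf.congr fun x hx => hFf hx.2)
  exact ⟨F, hFf, hFcont, hsolF⟩

variable {j₀ : ι}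

theorem exists_continuous_solvesOn_univ (hi₀ : i₀ ∈ s) (hj₀ : j₀ ∈ s)
    (hmax : ∀ i ∈ s.erase i₀, e i < e i₀) (hmin : ∀ i ∈ s.erase j₀, e j₀ < e i)
    (hlen : e i₀ - e j₀ ≤ M - m) {f : ℝ → ℝ} (hf : ContinuousOn f (Icc m M))
    (hsol : SolvesOn s e f (Icc m M)) :
    ∃ F, Continuous F ∧ SolvesOn s e F univ ∧ EqOn F f (Icc m M) := by
  have hspread : ∀ i ∈ s, ∀ j ∈ s, e i - e j ≤ M - m := fun i hi j hj =>
    (sub_le_sub_of_extreme hmax hmin hi hj).trans hlen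
  obtain ⟨F, hFf, hFcont, hFsol⟩ :=
    exists_continuous_extension_Ici hi₀ hmax (fun i hi => hspread i₀ hi₀ i hi) hf hsol
  obtain ⟨G, hGF, hGcont, hGsol⟩ :=
    exists_continuous_extension_Ici (e := -e) (m := -M) (M := -m) (f := fun x => F (-x))
      hj₀ (by simpa using hmin)
      (fun i hi => by simp only [Pi.neg_apply]; linarith [hspread i hi j₀ hj₀])
      (hFcont.comp continuousOn_neg fun x hx => le_neg_of_le_neg hx.2)
      (by simpa using (hsol.congr fun x hx => (hFf hx.2).symm).comp_neg)
  have hGF' : EqOn (fun x => G (-x)) F (Ici m) := fun x hx => by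
    simpa using hGF (neg_le_neg (mem_Ici.1 hx))
  have hmM : m ≤ M := by linarith [hspread i₀ hi₀ i₀ hi₀]
  refine ⟨fun x => G (-x), ?_, ?_, fun x hx => (hGF' hx.1).trans (hFf hx.2)⟩
  · refine continuousOn_univ.1 ?_
    rw [← Iic_union_Ici_of_le hmM]
    exact (hGcont.comp continuousOn_neg fun x hx => neg_le_neg (mem_Iic.1 hx)).union_of_isClosed
      (hFcont.congr hGF') isClosed_Iic isClosed_Ici
  · refine SolvesOn.univ_of_Iic_of_Ici hspread ?_ (hFsol.congr hGF'.symm)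
    simpa using hGsol.comp_neg

theorem eq_of_solvesOn_univ (hi₀ : i₀ ∈ s) (hj₀ : j₀ ∈ s)
    (hmax : ∀ i ∈ s.erase i₀, e i < e i₀) (hmin : ∀ i ∈ s.erase j₀, e j₀ < e i)
    (hlen : e i₀ - e j₀ ≤ M - m) {F₁ F₂ : ℝ → ℝ} (h₁ : SolvesOn s e F₁ univ)
    (h₂ : SolvesOn s e F₂ univ) (hc : EqOn F₁ F₂ (Icc m M)) : F₁ = F₂ := by
  have hspread : ∀ i ∈ s, ∀ j ∈ s, e i - e j ≤ M - m := fun i hi j hj =>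
    (sub_le_sub_of_extreme hmax hmin hi hj).trans hlen
  have hright := eqOn_Ici_of_eqOn_Icc hi₀ hmax (fun i hi => hspread i₀ hi₀ i hi)
    (fun w _ => solvesOn_univ.1 h₁ w) (fun w _ => solvesOn_univ.1 h₂ w) hc
  have hleft := eqOn_Ici_of_eqOn_Icc (e := -e) (m := -M) (c := -m) hj₀ (by simpa using hmin)
    (fun i hi => by simp only [Pi.neg_apply]; linarith [hspread i hi j₀ hj₀])
    (fun w _ => solvesOn_univ.1 (by simpa using h₁.comp_neg) w)
    (fun w _ => solvesOn_univ.1 (by simpa using h₂.comp_neg) w)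
    (fun x hx => hc ⟨le_neg_of_le_neg hx.2, neg_le.1 hx.1⟩)
  funext x
  rcases le_total m x with hx | hx
  · exact hright hx
  · simpa using hleft (show -M ≤ -x by linarith [hspread i₀ hi₀ i₀ hi₀])

end ShiftEquation

theorem sum_Icc_zero_update_zero (N : ℕ) (b : ℕ → ℝ) (F : ℝ → ℝ) (w : ℝ) :
    ∑ k ∈ Finset.Icc 0 N, F (w + update b 0 0 k) = F w + ∑ k ∈ Finset.Icc 1 N, F (w + b k) := by
  rw [← Finset.insert_Icc_add_one_left_eq_Icc N.zero_le, Finset.sum_insert (by simp)]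
  refine congrArg₂ _ (by simp) (Finset.sum_congr rfl fun k hk => ?_)
  rw [update_of_ne (by simp at hk; omega)]

theorem forall_mem_Icc_zero_update_zero (N : ℕ) (b : ℕ → ℝ) (P : ℝ → Prop) :
    (∀ k ∈ Finset.Icc 0 N, P (update b 0 0 k)) ↔ P 0 ∧ ∀ k, 1 ≤ k → k ≤ N → P (b k) := by
  rw [← Finset.insert_Icc_add_one_left_eq_Icc N.zero_le, Finset.forall_mem_insert]
  refine and_congr (by simp) (forall_congr' fun k => ?_)
  simp only [Finset.mem_Icc, and_imp]
  refine imp_congr_right fun hk => imp_congr_right fun _ => ?_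
  rw [update_of_ne (show k ≠ 0 by omega)]

theorem ShiftEquation.solvesOn_Icc_zero_update_zero_iff {N : ℕ} {b : ℕ → ℝ} {F : ℝ → ℝ}
    {I : Set ℝ} : SolvesOn (Finset.Icc 0 N) (update b 0 0) F I ↔
      ∀ w, (w ∈ I ∧ ∀ k, 1 ≤ k → k ≤ N → w + b k ∈ I) →
        F w + ∑ k ∈ Finset.Icc 1 N, F (w + b k) = 0 := by
  refine forall_congr' fun w => ?_
  rw [forall_mem_Icc_zero_update_zero N b (fun x => w + x ∈ I), sum_Icc_zero_update_zero,
    add_zero]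

theorem strictMonoOn_update_zero {N : ℕ} {b : ℕ → ℝ} (hb1 : 0 < b 1)
    (hmono : ∀ k, 1 ≤ k → k < N → b k < b (k + 1)) : StrictMonoOn (update b 0 0) (Iic N) := by
  refine strictMonoOn_Iic_of_lt_succ fun k hk => ?_
  rcases Nat.eq_zero_or_pos k with rfl | hk0
  · simpa using hb1
  · simpa [update_of_ne hk0.ne'] using hmono k hk0 hk

theorem StrictMonoOn.forall_mem_erase_lt_top {e : ℕ → ℝ} {N : ℕ} (he : StrictMonoOn e (Iic N)) :
    ∀ k ∈ (Finset.Icc 0 N).erase N, e k < e N := fun k hk => by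
  simp only [Finset.mem_erase, Finset.mem_Icc] at hk
  exact he (mem_Iic.2 hk.2.2) self_mem_Iic (lt_of_le_of_ne hk.2.2 hk.1)

theorem StrictMonoOn.forall_mem_erase_bot_lt {e : ℕ → ℝ} {N : ℕ} (he : StrictMonoOn e (Iic N)) :
    ∀ k ∈ (Finset.Icc 0 N).erase 0, e 0 < e k := fun k hk => by
  simp only [Finset.mem_erase, Finset.mem_Icc] at hk
  exact he (mem_Iic.2 N.zero_le) (mem_Iic.2 hk.2.2) (Nat.pos_of_ne_zero hk.1)

open ShiftEquation in
/-- A continuous solution `g` of the equation on `[0, b N]` extends in a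
unique way to a continuous solution `g̃` of the equation on all of `ℝ`. -/
theorem stmt_7 (N : ℕ) (hN : 1 ≤ N) (b : ℕ → ℝ) (hb1 : 0 < b 1)
    (hmono : ∀ k, 1 ≤ k → k < N → b k < b (k + 1)) (g : ℝ → ℝ)
    (hg : ContinuousOn g (Set.Icc 0 (b N)))
    (heq : ∀ w : ℝ,
      (w ∈ Set.Icc 0 (b N) ∧ ∀ k, 1 ≤ k → k ≤ N → w + b k ∈ Set.Icc 0 (b N)) →
      g w + ∑ k ∈ Finset.Icc 1 N, g (w + b k) = 0) :
    ∃! gt : ℝ → ℝ,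
      Continuous gt ∧
      (∀ w : ℝ, gt w + ∑ k ∈ Finset.Icc 1 N, gt (w + b k) = 0) ∧
      ∀ x ∈ Set.Icc 0 (b N), gt x = g x := by
  have he := strictMonoOn_update_zero hb1 hmono
  have hmem : N ∈ Finset.Icc 0 N ∧ 0 ∈ Finset.Icc 0 N := by simp
  have hlen : update b 0 0 N - update b 0 0 0 ≤ b N - 0 := by
    simp [update_of_ne (show N ≠ 0 by omega)]
  have hsolves : ∀ F, SolvesOn (Finset.Icc 0 N) (update b 0 0) F univ ↔
      ∀ w, F w + ∑ k ∈ Finset.Icc 1 N, F (w + b k) = 0 := fun F =>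
    solvesOn_Icc_zero_update_zero_iff.trans (by simp)
  obtain ⟨F, hFcont, hFsol, hFg⟩ := exists_continuous_solvesOn_univ hmem.1 hmem.2
    he.forall_mem_erase_lt_top he.forall_mem_erase_bot_lt hlen hg
    (solvesOn_Icc_zero_update_zero_iff.2 heq)
  refine ⟨F, ⟨hFcont, (hsolves F).1 hFsol, fun x hx => hFg hx⟩, fun G ⟨_, hG, hGg⟩ => ?_⟩
  exact eq_of_solvesOn_univ hmem.1 hmem.2 he.forall_mem_erase_lt_top he.forall_mem_erase_bot_lt
    hlen ((hsolves G).2 hG) hFsol fun x hx => (hGg x hx).trans (hFg hx).symm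
end

section
/- Let N ≥ 1 and let 0 < b_1 < b_2 < ⋯ < b_N be real numbers. Then the set S = { g : ℝ → ℝ : g is continuous and g(w) + g(w + b_1) + ⋯ + g(w + b_N) = 0 for all w ∈ ℝ } is a real vector subspace of C(ℝ) that is infinite dimensional (i.e., it is not a finite-dimensional subspace). -/
/-
A solution may be prescribed on `[0, b N]` as any continuous `u` vanishing at `0` and at the
shifts `b k`. For `x < 0` the equation at `w = x` determines `g x` from values to the right of `x`,
and for `x > b N` the equation at `w = x - b N` determines it from values to the left. When
`ε ≤ b 1` and `ε ≤ b N - b k` for `k < N`, every such step only consults points at least `ε`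
closer to `[0, b N]`, so `⌈dist / ε⌉` iterations of the step fix `g` at each point; the vanishing
of `u` makes the pieces glue continuously. The choices `u = x ∏ (x - b k) · x ^ j`, `j ∈ ℕ`, give
solutions whose restrictions to `[0, b N]` are linearly independent polynomials.
-/

open Finset Function Polynomial Topology

section

variable {N : ℕ} {b : ℕ → ℝ} {ε : ℝ} {u g h : ℝ → ℝ}

structure ExtensionStep (N : ℕ) (b : ℕ → ℝ) (ε : ℝ) : Prop where
  one_le : 1 ≤ N
  pos : 0 < ε
  le_shift : ∀ k ∈ Icc 1 N, ε ≤ b k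
  add_le_top : ∀ k ∈ Ico 1 N, b k + ε ≤ b N

theorem ExtensionStep.exists (hN : 1 ≤ N) (hpos : ∀ k ∈ Icc 1 N, 0 < b k)
    (htop : ∀ k ∈ Ico 1 N, b k < b N) : ∃ ε, ExtensionStep N b ε := by
  have hle : ∀ᶠ ε in 𝓝[>] (0 : ℝ), (∀ k ∈ Icc 1 N, ε ≤ b k) ∧
      ∀ k ∈ Ico 1 N, b k + ε ≤ b N := by
    refine nhdsWithin_le_nhds (Filter.Eventually.and ?_ ?_) <;>
      refine (Filter.eventually_all_finset _).2 fun k hk => ?_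
    · exact (eventually_lt_nhds (hpos k hk)).mono fun _ => le_of_lt
    · exact (eventually_lt_nhds (sub_pos.2 (htop k hk))).mono fun _ h => by linarith
  obtain ⟨ε, ⟨hpos', htop'⟩, hε⟩ := (hle.and self_mem_nhdsWithin).exists
  exact ⟨ε, hN, hε, hpos', htop'⟩

theorem ExtensionStep.le_top (hε : ExtensionStep N b ε) : ε ≤ b N :=
  hε.le_shift N (right_mem_Icc.2 hε.one_le)

theorem ExtensionStep.shift_mem_Icc (hε : ExtensionStep N b ε) {k : ℕ} (hk : k ∈ Icc 1 N) :
    b k ∈ Set.Icc 0 (b N) := by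
  refine ⟨(hε.pos.trans_le (hε.le_shift k hk)).le, ?_⟩
  rcases (Finset.mem_Icc.1 hk).2.lt_or_eq with hkN | rfl
  · linarith [hε.add_le_top k (mem_Ico.2 ⟨(Finset.mem_Icc.1 hk).1, hkN⟩), hε.pos]
  · exact le_rfl

variable (N b) in
noncomputable def extendStep (u g : ℝ → ℝ) (x : ℝ) : ℝ :=
  if x ≤ 0 then -∑ k ∈ Icc 1 N, g (x + b k)
  else if x ≤ b N then u x
  else -(g (x - b N) + ∑ k ∈ Ico 1 N, g (x - b N + b k))

variable (N b) in
def outDist (x : ℝ) : ℝ := max (-x) (x - b N)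

theorem outDist_nonpos_iff {x : ℝ} : outDist N b x ≤ 0 ↔ x ∈ Set.Icc 0 (b N) := by
  simp only [outDist, max_le_iff, neg_nonpos, sub_nonpos, Set.mem_Icc]

theorem extendStep_eqOn (hε : ExtensionStep N b ε) {r : ℝ} (hr : 0 ≤ r)
    (hgh : Set.EqOn g h {x | outDist N b x ≤ r}) :
    Set.EqOn (extendStep N b u g) (extendStep N b u h) {x | outDist N b x ≤ r + ε} := by
  intro x hx
  have hx' : -x ≤ r + ε ∧ x - b N ≤ r + ε := max_le_iff.1 hx
  have hbN := hε.le_top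
  have hmem : ∀ y, -y ≤ r → y - b N ≤ r → y ∈ {x | outDist N b x ≤ r} :=
    fun y h₁ h₂ => max_le h₁ h₂
  unfold extendStep
  split_ifs with h₀ h₁
  · congr 1
    refine sum_congr rfl fun k hk => hgh (hmem _ ?_ ?_)
    · linarith [hε.le_shift k hk]
    · linarith [(hε.shift_mem_Icc hk).2]
  · rfl
  · have hb0 : ∀ k ∈ Ico 1 N, 0 ≤ b k := fun k hk =>
      (hε.shift_mem_Icc (Ico_subset_Icc_self hk)).1
    congr 2
    · exact hgh (hmem _ (by linarith) (by linarith))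
    · refine sum_congr rfl fun k hk => hgh (hmem _ ?_ ?_)
      · linarith [hb0 k hk]
      · linarith [hε.add_le_top k hk]

variable (N b) in
def VanishesAtShifts (u : ℝ → ℝ) : Prop := u 0 = 0 ∧ ∀ k ∈ Icc 1 N, u (b k) = 0

theorem extendStep_eqOn_Icc (hε : ExtensionStep N b ε) (hu : VanishesAtShifts N b u)
    (hg : Set.EqOn g u (Set.Icc 0 (b N))) :
    Set.EqOn (extendStep N b u g) u (Set.Icc 0 (b N)) := by
  rintro x ⟨hx₀, hxN⟩
  unfold extendStep
  split_ifs with h₀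
  · obtain rfl : x = 0 := le_antisymm h₀ hx₀
    rw [hu.1, neg_eq_zero]
    refine sum_eq_zero fun k hk => ?_
    rw [zero_add, hg (hε.shift_mem_Icc hk), hu.2 k hk]
  · rfl

theorem continuous_extendStep (hε : ExtensionStep N b ε) (hu : VanishesAtShifts N b u)
    (hu_cont : Continuous u) (hg_cont : Continuous g) (hg : Set.EqOn g u (Set.Icc 0 (b N))) :
    Continuous (extendStep N b u g) := by
  have hval : ∀ k ∈ Icc 1 N, g (b k) = 0 := fun k hk => by
    rw [hg (hε.shift_mem_Icc hk), hu.2 k hk]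
  have hbN : 0 ≤ b N := (hε.pos.trans_le hε.le_top).le
  refine Continuous.if_le (by fun_prop) (Continuous.if_le hu_cont (by fun_prop) continuous_id
    continuous_const ?_) continuous_id continuous_const ?_
  · rintro x rfl
    rw [sub_self, hg ⟨le_rfl, hbN⟩, hu.1, zero_add, hu.2 N (right_mem_Icc.2 hε.one_le),
      sum_eq_zero fun k hk => by rw [zero_add, hval k (Ico_subset_Icc_self hk)], neg_zero]
  · rintro x rfl
    rw [if_pos hbN, hu.1, neg_eq_zero]
    exact sum_eq_zero fun k hk => by rw [zero_add, hval k hk]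

theorem iterate_extendStep_eqOn_Icc (hε : ExtensionStep N b ε) (hu : VanishesAtShifts N b u)
    (n : ℕ) : Set.EqOn ((extendStep N b u)^[n] u) u (Set.Icc 0 (b N)) := by
  induction n with
  | zero => exact Set.eqOn_refl _ _
  | succ n ih =>
    rw [iterate_succ_apply']
    exact extendStep_eqOn_Icc hε hu ih

theorem continuous_iterate_extendStep (hε : ExtensionStep N b ε) (hu : VanishesAtShifts N b u)
    (hu_cont : Continuous u) (n : ℕ) : Continuous ((extendStep N b u)^[n] u) := by
  induction n with
  | zero => exact hu_cont
  | succ n ih =>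
    rw [iterate_succ_apply']
    exact continuous_extendStep hε hu hu_cont ih (iterate_extendStep_eqOn_Icc hε hu n)

theorem iterate_succ_extendStep_eqOn (hε : ExtensionStep N b ε) (hu : VanishesAtShifts N b u)
    (n : ℕ) : Set.EqOn ((extendStep N b u)^[n + 1] u) ((extendStep N b u)^[n] u)
      {x | outDist N b x ≤ n * ε} := by
  induction n with
  | zero =>
    intro x (hx : outDist N b x ≤ (0 : ℕ) * ε)
    rw [Nat.cast_zero, zero_mul, outDist_nonpos_iff] at hx
    exact iterate_extendStep_eqOn_Icc hε hu 1 hx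
  | succ n ih =>
    simp only [iterate_succ_apply'] at ih ⊢
    rw [Nat.cast_succ, add_one_mul]
    exact extendStep_eqOn hε (mul_nonneg n.cast_nonneg hε.pos.le) ih

theorem iterate_extendStep_eqOn_of_le (hε : ExtensionStep N b ε) (hu : VanishesAtShifts N b u)
    {n m : ℕ} (hnm : n ≤ m) : Set.EqOn ((extendStep N b u)^[m] u) ((extendStep N b u)^[n] u)
      {x | outDist N b x ≤ n * ε} := by
  induction m, hnm using Nat.le_induction with
  | base => exact Set.eqOn_refl _ _
  | succ m hnm ih =>
    refine Set.EqOn.trans (fun x hx => iterate_succ_extendStep_eqOn hε hu m ?_) ih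
    exact (show outDist N b x ≤ n * ε from hx).trans
      (mul_le_mul_of_nonneg_right (Nat.cast_le.2 hnm) hε.pos.le)

variable (N b ε) in
noncomputable def extension (u : ℝ → ℝ) (x : ℝ) : ℝ :=
  (extendStep N b u)^[⌈outDist N b x / ε⌉₊] u x

theorem extension_eqOn_iterate (hε : ExtensionStep N b ε) (hu : VanishesAtShifts N b u)
    (n : ℕ) : Set.EqOn (extension N b ε u) ((extendStep N b u)^[n] u)
      {x | outDist N b x ≤ n * ε} := by
  intro x hx
  have hceil : outDist N b x ≤ ⌈outDist N b x / ε⌉₊ * ε :=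
    (div_le_iff₀ hε.pos).1 (Nat.le_ceil _)
  rw [extension, ← iterate_extendStep_eqOn_of_le hε hu (le_max_right n _) hceil,
    iterate_extendStep_eqOn_of_le hε hu (le_max_left _ _) hx]

theorem extendStep_extension (hε : ExtensionStep N b ε) (hu : VanishesAtShifts N b u) :
    extendStep N b u (extension N b ε u) = extension N b ε u := by
  funext x
  obtain ⟨n, hn⟩ := exists_nat_ge (outDist N b x / ε)
  have hx : outDist N b x ≤ n * ε + ε := by linarith [(div_le_iff₀ hε.pos).1 hn, hε.pos]
  rw [extendStep_eqOn hε (mul_nonneg n.cast_nonneg hε.pos.le) (extension_eqOn_iterate hε hu n) hx,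
    ← iterate_succ_apply' (extendStep N b u),
    extension_eqOn_iterate hε hu (n + 1) (by rwa [Nat.cast_succ, add_one_mul])]

theorem continuous_extension (hε : ExtensionStep N b ε) (hu : VanishesAtShifts N b u)
    (hu_cont : Continuous u) : Continuous (extension N b ε u) := by
  refine continuous_iff_continuousAt.2 fun x => ?_
  obtain ⟨n, hn⟩ := exists_nat_gt (outDist N b x / ε)
  have hopen : IsOpen {y | outDist N b y < n * ε} :=
    isOpen_lt (by unfold outDist; fun_prop) continuous_const
  refine (continuous_iterate_extendStep hε hu hu_cont n).continuousAt.congr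
    (Filter.eventuallyEq_of_mem (hopen.mem_nhds ((div_lt_iff₀ hε.pos).1 hn)) ?_)
  exact fun y (hy : outDist N b y < n * ε) => (extension_eqOn_iterate hε hu n hy.le).symm

theorem extension_eqOn_Icc (hε : ExtensionStep N b ε) (hu : VanishesAtShifts N b u) :
    Set.EqOn (extension N b ε u) u (Set.Icc 0 (b N)) := fun x hx =>
  extension_eqOn_iterate hε hu 0 (by simpa [outDist_nonpos_iff] using hx)

theorem add_sum_eq_zero_of_extendStep_eq (hε : ExtensionStep N b ε)
    (hg : extendStep N b u g = g) (w : ℝ) : g w + ∑ k ∈ Icc 1 N, g (w + b k) = 0 := by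
  have hbN := hε.le_top
  by_cases hw : w ≤ 0
  · have := congrFun hg w
    rw [extendStep, if_pos hw] at this
    linarith
  · have := congrFun hg (w + b N)
    rw [extendStep, if_neg (by linarith [hε.pos]), if_neg (by linarith), add_sub_cancel_right]
      at this
    rw [← Ico_add_one_right_eq_Icc, sum_Ico_succ_top hε.one_le]
    linarith

variable (N b) in
def solutionSubmodule : Submodule ℝ C(ℝ, ℝ) where
  carrier := {g | ∀ w, g w + ∑ k ∈ Icc 1 N, g (w + b k) = 0}
  add_mem' {g h} hg hh w := by
    simp only [ContinuousMap.add_apply, sum_add_distrib]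
    linarith [hg w, hh w]
  zero_mem' w := by simp
  smul_mem' r g hg w := by
    simp only [ContinuousMap.smul_apply, smul_eq_mul, ← mul_sum, ← mul_add, hg w, mul_zero]

noncomputable def extensionSolution (hε : ExtensionStep N b ε)
    (hu : VanishesAtShifts N b u) (hu_cont : Continuous u) : solutionSubmodule N b :=
  ⟨⟨extension N b ε u, continuous_extension hε hu hu_cont⟩,
    add_sum_eq_zero_of_extendStep_eq hε (extendStep_extension hε hu)⟩

variable (N b) in
noncomputable def shiftPoly : ℝ[X] := X * ∏ k ∈ Icc 1 N, (X - C (b k))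

theorem vanishesAtShifts_eval_shiftPoly_mul (q : ℝ[X]) :
    VanishesAtShifts N b fun x => (shiftPoly N b * q).eval x := by
  refine ⟨by simp [shiftPoly], fun k hk => ?_⟩
  simp [shiftPoly, eval_prod, prod_eq_zero hk]

theorem Polynomial.injective_pi_leval {R : Type*} [CommRing R] [IsDomain R] {s : Set R}
    (hs : s.Infinite) : Injective (LinearMap.pi fun x : s => leval (x : R)) :=
  (injective_iff_map_eq_zero _).2 fun q hq =>
    eq_zero_of_infinite_isRoot q (hs.mono fun x hx => congrFun hq ⟨x, hx⟩)

theorem not_finite_solutionSubmodule (hε : ExtensionStep N b ε) :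
    ¬ Module.Finite ℝ (solutionSubmodule N b) := by
  intro hfin
  set P := shiftPoly N b
  have hP : P ≠ 0 := (monic_X.mul (monic_prod_of_monic _ _ fun k _ => monic_X_sub_C _)).ne_zero
  let v (j : ℕ) : solutionSubmodule N b :=
    extensionSolution hε (vanishesAtShifts_eval_shiftPoly_mul (basisMonomials ℝ j))
      (P * basisMonomials ℝ j).continuous
  let restrict : solutionSubmodule N b →ₗ[ℝ] Set.Icc 0 (b N) → ℝ :=
    LinearMap.funLeft ℝ ℝ Subtype.val ∘ₗ ContinuousMap.coeFnLinearMap ℝ ∘ₗ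
      (solutionSubmodule N b).subtype
  have hv : restrict ∘ v = (LinearMap.pi fun x : Set.Icc 0 (b N) => leval (x : ℝ)) ∘
      LinearMap.mulLeft ℝ P ∘ basisMonomials ℝ := by
    funext j x
    exact extension_eqOn_Icc hε (vanishesAtShifts_eval_shiftPoly_mul _) x.2
  have hindep : LinearIndependent ℝ (restrict ∘ v) := by
    rw [hv]
    exact ((basisMonomials ℝ).linearIndependent.map' _
      (LinearMap.ker_eq_bot.2 (mul_right_injective₀ hP))).map' _
      (LinearMap.ker_eq_bot.2 (injective_pi_leval (Set.Icc_infinite (hε.pos.trans_le hε.le_top))))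
  exact Module.Finite.not_linearIndependent_of_infinite _ (hindep.of_comp restrict)

end

/-- The set of continuous solutions `g : ℝ → ℝ` of
`g w + ∑_{k=1}^N g (w + b k) = 0` is a vector subspace of `C(ℝ)` that is infinite
dimensional (it is not a finite-dimensional space). -/
theorem stmt_8 (N : ℕ) (hN : 1 ≤ N) (b : ℕ → ℝ) (hb1 : 0 < b 1)
    (hmono : ∀ k, 1 ≤ k → k < N → b k < b (k + 1)) :
    ∃ S : Submodule ℝ C(ℝ, ℝ),
      (∀ g : C(ℝ, ℝ), g ∈ S ↔ ∀ w : ℝ, g w + ∑ k ∈ Finset.Icc 1 N, g (w + b k) = 0) ∧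
      ¬ Module.Finite ℝ S := by
  have hb : StrictMonoOn b (Set.Icc 1 N) :=
    strictMonoOn_of_lt_succ Set.ordConnected_Icc fun k _ hk hk₁ => by
      rw [Order.succ_eq_add_one] at hk₁ ⊢
      exact hmono k hk.1 (Nat.add_one_le_iff.1 hk₁.2)
  obtain ⟨ε, hε⟩ := ExtensionStep.exists hN
    (fun k hk => hb1.trans_le (hb.monotoneOn ⟨le_rfl, hN⟩ (by simpa using hk) (mem_Icc.1 hk).1))
    (fun k hk => hb (by simpa using Ico_subset_Icc_self hk) ⟨hN, le_rfl⟩ (mem_Ico.1 hk).2)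
  exact ⟨solutionSubmodule N b, fun _ => Iff.rfl, not_finite_solutionSubmodule hε⟩
end

section
/- Let N ≥ 1 and let 1 = a_0 < a_1 < a_2 < ⋯ < a_N be real numbers. Then the set of continuous functions f : (0,∞) → ℝ satisfying f(x) + f(a_1 x) + ⋯ + f(a_N x) = 0 for all x ∈ (0,∞) is a real vector subspace of C((0,∞)) that is infinite dimensional (i.e., it is not a finite-dimensional subspace). -/
/-!
Writing `x = exp t` and `c k = log (a k)`, the equation becomes `∑ k ≤ N, g (t + c k) = 0` with
`0 = c 0 < c 1 < ⋯ < c N`. A continuous `h` on `[0, c N]` with `∑ k ≤ N, h (c k) = 0` extends to a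
continuous solution: for `t > c N` the equation at `t - c N` expresses `g t` through the values at
`t - c N + c k` (`k < N`), and for `t < 0` the equation at `t` expresses it through the values at
`t + c (k + 1)`. Both move the argument at least `min (c 1) (c N - c (N - 1))` towards `[0, c N]`,
so the recursion terminates; it is realised as the iterates of the one-step operator `extendStep`,
which stabilise pointwise. The compatibility condition on `h` is exactly what makes the pieces glue
continuously at `0` and at `c N`. Bumps with disjoint supports in `(0, c 1)` are compatible, and
their extensions are infinitely many linearly independent solutions.
-/

open Finset Set Metric Filter Topology Function

lemma Nat.ceil_div_lt_ceil_div {x y δ : ℝ} (hδ : 0 < δ) (hy : 0 < y)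
    (hxy : x ≤ max (y - δ) 0) : ⌈x / δ⌉₊ < ⌈y / δ⌉₊ := by
  have hpos : 0 < ⌈y / δ⌉₊ := Nat.ceil_pos.2 (_root_.div_pos hy hδ)
  rcases le_max_iff.1 hxy with hx | hx
  · have : x / δ ≤ y / δ - 1 := by
      rw [le_sub_iff_add_le, div_add_one hδ.ne', div_le_div_iff_of_pos_right hδ]; linarith
    calc ⌈x / δ⌉₊ ≤ ⌈y / δ - 1⌉₊ := Nat.ceil_le_ceil this
      _ < ⌈y / δ⌉₊ := by rw [Nat.ceil_sub_one]; omega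
  · rwa [Nat.ceil_eq_zero.2 (div_nonpos_of_nonpos_of_nonneg hx hδ.le)]

namespace ShiftEquation

variable (c : ℕ → ℝ) (N : ℕ)

noncomputable def gap : ℝ := min (c 1) (c N - c (N - 1))

noncomputable def depth (t : ℝ) : ℕ := ⌈max (t - c N) (-t) / gap c N⌉₊

noncomputable def extendStep (h g : ℝ → ℝ) (t : ℝ) : ℝ :=
  if 0 ≤ t then
    if t ≤ c N then h t else -∑ k ∈ range N, g (t - c N + c k)
  else -∑ k ∈ range N, g (t + c (k + 1))

noncomputable def extension (h : ℝ → ℝ) (t : ℝ) : ℝ :=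
  (extendStep c N h)^[depth c N t] h t

variable {c N}

lemma extendStep_of_mem_Icc (h g : ℝ → ℝ) {t : ℝ} (ht : t ∈ Icc 0 (c N)) :
    extendStep c N h g t = h t := by
  simp [extendStep, ht.1, ht.2]

lemma iterate_extendStep_of_mem_Icc (h : ℝ → ℝ) {t : ℝ} (ht : t ∈ Icc 0 (c N)) :
    ∀ n, (extendStep c N h)^[n] h t = h t
  | 0 => rfl
  | n + 1 => by
    rw [Function.iterate_succ_apply']
    exact extendStep_of_mem_Icc h _ ht

section

variable (hc0 : c 0 = 0) (hc : StrictMonoOn c (Set.Iic N))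
include hc0 hc

lemma mem_Icc_of_le {k : ℕ} (hk : k ≤ N) : c k ∈ Icc 0 (c N) :=
  ⟨hc0 ▸ hc.monotoneOn (by simp) (by simpa using hk) k.zero_le,
    hc.monotoneOn (by simpa using hk) (by simp) hk⟩

variable (hN : 1 ≤ N)
include hN

lemma gap_pos : 0 < gap c N :=
  lt_min (hc0 ▸ hc (by simp) (by simpa using hN) zero_lt_one)
    (sub_pos.2 (hc (by simp) (by simp) (by omega)))

omit hc0 in
lemma le_sub_gap {k : ℕ} (hk : k < N) : c k ≤ c N - gap c N := by
  have : c k ≤ c (N - 1) := hc.monotoneOn (by simp; omega) (by simp) (by omega)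
  have : gap c N ≤ c N - c (N - 1) := min_le_right _ _
  linarith

omit hc0 in
lemma gap_le {k : ℕ} (hk : k < N) : gap c N ≤ c (k + 1) :=
  (min_le_left _ _).trans (hc.monotoneOn (by simpa using hN) (by simpa using hk) (by omega))

lemma depth_eq_zero_iff {t : ℝ} : depth c N t = 0 ↔ t ∈ Icc 0 (c N) := by
  rw [depth, Nat.ceil_eq_zero, div_le_iff₀ (gap_pos hc0 hc hN), zero_mul, max_le_iff]
  constructor <;> rintro ⟨h1, h2⟩ <;> constructor <;> linarith

lemma depth_forward_lt {t : ℝ} (ht : c N < t) {k : ℕ} (hk : k < N) :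
    depth c N (t - c N + c k) < depth c N t := by
  have := le_sub_gap hc hN hk
  have := (mem_Icc_of_le hc0 hc hk.le).1
  refine Nat.ceil_div_lt_ceil_div (gap_pos hc0 hc hN) (lt_max_of_lt_left (by linarith)) ?_
  exact max_le (le_max_of_le_left (by linarith [le_max_left (t - c N) (-t)]))
    (le_max_of_le_right (by linarith))

lemma depth_backward_lt {t : ℝ} (ht : t < 0) {k : ℕ} (hk : k < N) :
    depth c N (t + c (k + 1)) < depth c N t := by
  have := gap_le hc hN hk
  have := (mem_Icc_of_le hc0 hc (by omega : k + 1 ≤ N)).2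
  refine Nat.ceil_div_lt_ceil_div (gap_pos hc0 hc hN) (lt_max_of_lt_right (by linarith)) ?_
  exact max_le (le_max_of_le_right (by linarith))
    (le_max_of_le_left (by linarith [le_max_right (t - c N) (-t)]))

lemma extendStep_congr (h : ℝ → ℝ) {g g' : ℝ → ℝ} {t : ℝ}
    (hgg' : ∀ s, depth c N s < depth c N t → g s = g' s) :
    extendStep c N h g t = extendStep c N h g' t := by
  unfold extendStep
  split_ifs with h0 hle
  · rfl
  · exact congrArg Neg.neg (sum_congr rfl fun k hk =>
      hgg' _ (depth_forward_lt hc0 hc hN (not_le.1 hle) (mem_range.1 hk)))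
  · exact congrArg Neg.neg (sum_congr rfl fun k hk =>
      hgg' _ (depth_backward_lt hc0 hc hN (not_le.1 h0) (mem_range.1 hk)))

lemma iterate_extendStep_succ (h : ℝ → ℝ) :
    ∀ n t, depth c N t ≤ n →
      (extendStep c N h)^[n + 1] h t = (extendStep c N h)^[n] h t
  | 0, t, ht => extendStep_of_mem_Icc h h ((depth_eq_zero_iff hc0 hc hN).1 (Nat.le_zero.1 ht))
  | n + 1, t, ht => by
    rw [Function.iterate_succ_apply']
    conv_rhs => rw [Function.iterate_succ_apply']
    exact extendStep_congr hc0 hc hN h fun s hs =>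
      iterate_extendStep_succ h n s (by omega)

lemma iterate_extendStep_eq_extension (h : ℝ → ℝ) {n : ℕ} {t : ℝ} (ht : depth c N t ≤ n) :
    (extendStep c N h)^[n] h t = extension c N h t := by
  induction n, ht using Nat.le_induction with
  | base => rfl
  | succ n hn ih => rw [iterate_extendStep_succ hc0 hc hN h n t hn, ih]

lemma extendStep_extension (h : ℝ → ℝ) (t : ℝ) :
    extendStep c N h (extension c N h) t = extension c N h t := by
  rw [← iterate_extendStep_eq_extension hc0 hc hN h (Nat.le_succ _),
    Function.iterate_succ_apply']
  exact extendStep_congr hc0 hc hN h fun s hs =>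
    (iterate_extendStep_eq_extension hc0 hc hN h hs.le).symm

lemma extension_of_mem_Icc (h : ℝ → ℝ) {t : ℝ} (ht : t ∈ Icc 0 (c N)) :
    extension c N h t = h t := by
  rw [← extendStep_extension hc0 hc hN]
  exact extendStep_of_mem_Icc h _ ht

variable {h : ℝ → ℝ} (hcompat : ∑ k ∈ range (N + 1), h (c k) = 0)
include hcompat

lemma sum_extension_eq_zero (t : ℝ) : ∑ k ∈ range (N + 1), extension c N h (t + c k) = 0 := by
  rcases lt_trichotomy t 0 with ht | rfl | ht
  · rw [sum_range_succ', hc0, add_zero, ← extendStep_extension hc0 hc hN, extendStep,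
      if_neg (not_le.2 ht), add_neg_cancel]
  · refine (sum_congr rfl fun k hk => ?_).trans hcompat
    rw [zero_add, extension_of_mem_Icc hc0 hc hN h
      (mem_Icc_of_le hc0 hc (Nat.lt_succ_iff.1 (mem_range.1 hk)))]
  · have hcN : 0 ≤ c N := (mem_Icc_of_le hc0 hc le_rfl).1
    rw [sum_range_succ, ← extendStep_extension hc0 hc hN h (t + c N), extendStep,
      if_pos (by linarith), if_neg (by linarith)]
    simp only [add_sub_cancel_right, add_neg_cancel]

omit hN in
lemma continuous_extendStep (hh : Continuous h) {g : ℝ → ℝ} (hg : Continuous g)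
    (hgh : ∀ k ≤ N, g (c k) = h (c k)) : Continuous (extendStep c N h g) := by
  have hsum : ∑ k ∈ range N, g (c k) + h (c N) = 0 := by
    rw [← hcompat, sum_range_succ]
    exact congrArg (· + h (c N)) (sum_congr rfl fun k hk => hgh k (mem_range.1 hk).le)
  have hsum' : ∑ k ∈ range N, g (c (k + 1)) + h (c 0) = 0 := by
    rw [← hcompat, sum_range_succ']
    exact congrArg (· + h (c 0)) (sum_congr rfl fun k hk => hgh (k + 1) (mem_range.1 hk))
  refine ((hh.if_le (by fun_prop) continuous_id continuous_const ?_).if_le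
    (by fun_prop) continuous_const continuous_id ?_)
  · rintro t rfl
    simp only [sub_self, zero_add]
    linarith
  · rintro t rfl
    rw [id, if_pos (mem_Icc_of_le hc0 hc le_rfl).1]
    simp only [hc0, zero_add] at hsum' ⊢
    linarith

omit hN in
lemma continuous_iterate_extendStep (hh : Continuous h) :
    ∀ n, Continuous ((extendStep c N h)^[n] h)
  | 0 => hh
  | n + 1 => by
    rw [Function.iterate_succ']
    exact continuous_extendStep hc0 hc hcompat hh (continuous_iterate_extendStep hh n)
      fun k hk => iterate_extendStep_of_mem_Icc h (mem_Icc_of_le hc0 hc hk) n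

omit hcompat in
lemma depth_le_of_abs_le {t R : ℝ} (ht : |t| ≤ R) : depth c N t ≤ ⌈R / gap c N⌉₊ := by
  have hcN : 0 ≤ c N := (mem_Icc_of_le hc0 hc le_rfl).1
  refine Nat.ceil_le_ceil (div_le_div_of_nonneg_right (max_le ?_ ?_) (gap_pos hc0 hc hN).le)
  · linarith [le_abs_self t]
  · linarith [neg_le_abs t]

lemma continuous_extension (hh : Continuous h) : Continuous (extension c N h) := by
  refine continuous_iff_continuousAt.2 fun t₀ => ?_
  have hev : (extendStep c N h)^[⌈(|t₀| + 1) / gap c N⌉₊] h =ᶠ[𝓝 t₀] extension c N h := by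
    filter_upwards [ball_mem_nhds t₀ one_pos] with s hs
    rw [mem_ball, Real.dist_eq] at hs
    exact iterate_extendStep_eq_extension hc0 hc hN h
      (depth_le_of_abs_le hc0 hc hN (by linarith [abs_sub_abs_le_abs_sub s t₀]))
  exact (continuous_iterate_extendStep hc0 hc hcompat hh _).continuousAt.congr hev

theorem exists_solution_eqOn_Icc (hh : Continuous h) :
    ∃ g : C(ℝ, ℝ), (∀ t, ∑ k ∈ range (N + 1), g (t + c k) = 0) ∧ EqOn g h (Icc 0 (c N)) :=
  ⟨⟨extension c N h, continuous_extension hc0 hc hN hcompat hh⟩,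
    sum_extension_eq_zero hc0 hc hN hcompat, fun _ => extension_of_mem_Icc hc0 hc hN h⟩

end

end ShiftEquation

lemma linearIndependent_of_apply_eq_zero {ι R M : Type*} [CommRing R] [NoZeroDivisors R]
    [AddCommGroup M] [Module R M] {v : ι → M} (φ : ι → M →ₗ[R] R)
    (hdiag : ∀ i, φ i (v i) ≠ 0) (hoff : ∀ i j, i ≠ j → φ i (v j) = 0) :
    LinearIndependent R v := by
  refine linearIndependent_iff'.2 fun s g hg i hi => ?_
  have := congrArg (φ i) hg
  rw [map_sum, map_zero, sum_eq_single_of_mem i hi fun j _ hji => by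
    rw [map_smul, hoff i j hji.symm, smul_zero], map_smul, smul_eq_mul] at this
  exact (mul_eq_zero.1 this).resolve_right (hdiag i)

lemma exists_bumps_Ioo {u : ℝ} (hu : 0 < u) :
    ∃ (h : ℕ → ℝ → ℝ) (p : ℕ → ℝ), (∀ j, Continuous (h j)) ∧
      (∀ j t, t ∉ Ioo 0 u → h j t = 0) ∧ (∀ i, p i ∈ Ioo 0 u) ∧
      (∀ i, h i (p i) ≠ 0) ∧ ∀ i j, i ≠ j → h j (p i) = 0 := by
  set x : ℕ → ℝ := fun j => u / (j + 1)
  have hx : StrictAnti x := fun i j hij => by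
    simp only [x]
    gcongr
  set U : ℕ → Set ℝ := fun j => Ioo (x (j + 1)) (x j)
  have hUsub : ∀ j, U j ⊆ Ioo 0 u := fun j =>
    Ioo_subset_Ioo (by positivity) (div_le_self hu.le (by simp))
  have hdisj : Pairwise (Disjoint on U) := by
    simpa [Order.succ_eq_add_one] using hx.antitone.pairwise_disjoint_on_Ioo_succ
  set p : ℕ → ℝ := fun j => (x (j + 1) + x j) / 2
  have hpU : ∀ j, p j ∈ U j := fun j =>
    ⟨left_lt_add_div_two.2 (hx j.lt_succ_self), add_div_two_lt_right.2 (hx j.lt_succ_self)⟩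
  refine ⟨fun j t => infDist t (U j)ᶜ, p, fun j => continuous_infDist_pt _,
    fun j t ht => infDist_zero_of_mem fun htU => ht (hUsub j htU),
    fun i => hUsub i (hpU i), fun i => ?_,
    fun i j hij => infDist_zero_of_mem fun hpj => (hdisj hij).le_bot ⟨hpU i, hpj⟩⟩
  have hne : (U i)ᶜ.Nonempty := ⟨u, fun hu' => (hUsub i hu').2.false⟩
  exact ((isOpen_Ioo.isClosed_compl.notMem_iff_infDist_pos hne).1 fun h => h (hpU i)).ne'

namespace DilationEquation

def solutionSpace (a : ℕ → ℝ) (N : ℕ) : Submodule ℝ C(Set.Ioi (0 : ℝ), ℝ) where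
  carrier := {f | ∀ x : Set.Ioi (0 : ℝ), ∑ k ∈ Finset.range (N + 1),
    (if h : 0 < a k * (x : ℝ) then f ⟨a k * (x : ℝ), h⟩ else 0) = 0}
  zero_mem' x := by simp
  add_mem' {f g} hf hg x := by
    have := congrArg₂ (· + ·) (hf x) (hg x)
    simp only [← sum_add_distrib, add_zero] at this
    refine (sum_congr rfl fun k _ => ?_).trans this
    split_ifs <;> simp
  smul_mem' r f hf x := by
    have := congrArg (r * ·) (hf x)
    simp only [mul_sum, mul_zero] at this
    refine (sum_congr rfl fun k _ => ?_).trans this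
    split_ifs <;> simp

noncomputable def ofLog (g : C(ℝ, ℝ)) : C(Ioi (0 : ℝ), ℝ) :=
  g.comp ⟨fun x => Real.log x, Real.continuousOn_log.comp_continuous continuous_subtype_val
    fun x => x.2.ne'⟩

lemma ofLog_mem_solutionSpace {a : ℕ → ℝ} {N : ℕ} (ha : ∀ k ≤ N, 0 < a k) {g : C(ℝ, ℝ)}
    (hg : ∀ t, ∑ k ∈ range (N + 1), g (t + Real.log (a k)) = 0) :
    ofLog g ∈ solutionSpace a N := fun x => by
  refine (sum_congr rfl fun k hk => ?_).trans (hg (Real.log x))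
  have hak := ha k (Nat.lt_succ_iff.1 (mem_range.1 hk))
  rw [dif_pos (mul_pos hak x.2)]
  simp [ofLog, Real.log_mul hak.ne' x.2.ne', add_comm]

theorem not_finite_solutionSpace {a : ℕ → ℝ} {N : ℕ} (hN : 1 ≤ N) (ha0 : a 0 = 1)
    (ha : StrictMonoOn a (Set.Iic N)) : ¬ Module.Finite ℝ (solutionSpace a N) := by
  have hpos : ∀ k ≤ N, 0 < a k := fun k hk => by
    linarith [ha.monotoneOn (by simp) (by simpa using hk) k.zero_le]
  set c : ℕ → ℝ := fun k => Real.log (a k)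
  have hc0 : c 0 = 0 := by simp [c, ha0]
  have hc : StrictMonoOn c (Set.Iic N) := fun i hi j hj hij =>
    Real.log_lt_log (hpos i hi) (ha hi hj hij)
  have hc1 : 0 < c 1 := hc0 ▸ hc (by simp) (by simpa using hN) zero_lt_one
  obtain ⟨h, p, hcont, hsupp, hp, hdiag, hoff⟩ := exists_bumps_Ioo hc1
  have hcompat : ∀ j, ∑ k ∈ range (N + 1), h j (c k) = 0 := fun j =>
    sum_eq_zero fun k hk => hsupp j _ fun ⟨h0, h1⟩ => by
      rcases k with _ | k
      · exact h0.ne' hc0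
      · exact h1.not_ge (hc.monotoneOn (by simpa using hN)
          (by simpa using Nat.lt_succ_iff.1 (mem_range.1 hk)) (by omega))
  choose g hg hgh using fun j =>
    ShiftEquation.exists_solution_eqOn_Icc hc0 hc hN (hcompat j) (hcont j)
  have hval : ∀ i j, ofLog (g j) ⟨Real.exp (p i), Real.exp_pos _⟩ = h j (p i) := fun i j => by
    simpa [ofLog] using hgh j ⟨(hp i).1.le, (hp i).2.le.trans
      (hc.monotoneOn (by simpa using hN) (by simp) hN)⟩
  intro _
  refine Module.Finite.not_linearIndependent_of_infinite
    (fun j => (⟨ofLog (g j), ofLog_mem_solutionSpace hpos (hg j)⟩ : solutionSpace a N))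
    (LinearIndependent.of_comp (solutionSpace a N).subtype
      (linearIndependent_of_apply_eq_zero
        (fun i => (ContinuousMap.evalCLM ℝ ⟨Real.exp (p i), Real.exp_pos _⟩).toLinearMap)
        (fun i => by simpa [hval] using hdiag i) fun i j hij => by simpa [hval] using hoff i j hij))

end DilationEquation

/-- The set of continuous functions `f : (0, ∞) → ℝ` satisfying
`f x + f (a 1 * x) + ⋯ + f (a N * x) = 0` for all `x > 0` is a vector subspace of
`C((0, ∞))` that is infinite dimensional. -/
theorem stmt_9 (N : ℕ) (hN : 1 ≤ N) (a : ℕ → ℝ) (ha0 : a 0 = 1)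
    (hmono : ∀ k, k < N → a k < a (k + 1)) :
    ∃ S : Submodule ℝ C(Set.Ioi (0 : ℝ), ℝ),
      (∀ f : C(Set.Ioi (0 : ℝ), ℝ), f ∈ S ↔
        ∀ x : Set.Ioi (0 : ℝ),
          ∑ k ∈ Finset.range (N + 1),
            (if h : 0 < a k * (x : ℝ) then f ⟨a k * (x : ℝ), h⟩ else 0) = 0) ∧
      ¬ Module.Finite ℝ S :=
  ⟨DilationEquation.solutionSpace a N, fun _ => Iff.rfl,
    DilationEquation.not_finite_solutionSpace hN ha0
      (strictMonoOn_Iic_of_lt_succ (by simpa using hmono))⟩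
end

section
/- Let N ≥ 1 and let 0 < b_1 < b_2 < ⋯ < b_N be real numbers. The equation g(w) + g(w + b_1) + ⋯ + g(w + b_N) = 0 (for all w ∈ ℝ) admits a continuous periodic solution g ≠ 0 (i.e., a nonzero continuous g : ℝ → ℝ for which there exists T > 0 with g(x + T) = g(x) for all x) if and only if there exists α ∈ ℝ such that 1 + ∑_{k=1}^N cos(α b_k) = 0 and ∑_{k=1}^N sin(α b_k) = 0. -/
/-!
Lift a `T`-periodic solution `g` to the circle `ℝ / Tℤ`. Translation by `d` multiplies the
`n`-th Fourier coefficient by `e(n d / T)`, so the equation turns into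
`(1 + ∑ₖ exp (i α bₖ)) ĝ(n) = 0` with `α = 2πn/T`. A nonzero continuous function has a nonzero
Fourier coefficient, which forces the symbol `1 + ∑ₖ exp (i α bₖ)` to vanish at that `α`.
Conversely, if the symbol vanishes at `α`, then `w ↦ cos (α w)` is a solution: it is the real
part of `exp (i α w)` times the symbol. Since the symbol at `0` is `N + 1`, such an `α` is
nonzero, so this solution is periodic.
-/

open AddCircle Complex Finset Function MeasureTheory Real

namespace AddCircle

variable {T : ℝ} [Fact (0 < T)]

theorem fourierCoeff_comp_add_right {E : Type*} [NormedAddCommGroup E] [NormedSpace ℂ E]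
    (f : AddCircle T → E) (d : AddCircle T) (n : ℤ) :
    fourierCoeff (fun x => f (x + d)) n = fourier n d • fourierCoeff f n := by
  have hshift : ∀ x : AddCircle T, fourier (-n) (x - d) = fourier n d * fourier (-n) x := by
    intro x
    simp only [fourier_apply, smul_sub, neg_smul, sub_neg_eq_add, toCircle_add, Circle.coe_mul]
    ring
  rw [fourierCoeff, fourierCoeff, ← integral_smul,
    ← integral_add_right_eq_self (fun x => fourier (-n) x • f (x + d)) (-d)]
  simp_rw [← sub_eq_add_neg, sub_add_cancel, hshift, mul_smul]

theorem eq_zero_of_fourierCoeff_eq_zero {f : AddCircle T → ℂ} (hf : Continuous f)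
    (h : ∀ n, fourierCoeff f n = 0) : f = 0 := by
  have hcoeff : fourierCoeff (⟨f, hf⟩ : C(AddCircle T, ℂ)) = 0 := funext h
  have hsum := hasSum_fourier_series_of_summable (hcoeff ▸ summable_zero :
    Summable (fourierCoeff (⟨f, hf⟩ : C(AddCircle T, ℂ))))
  simp only [hcoeff, Pi.zero_apply, zero_smul] at hsum
  exact congrArg DFunLike.coe (hsum.unique hasSum_zero)

theorem exists_one_add_sum_fourier_eq_zero {ι : Type*} (s : Finset ι) (d : ι → AddCircle T)
    {G : AddCircle T → ℂ} (hG : Continuous G) (hG0 : G ≠ 0)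
    (heq : ∀ y, G y + ∑ k ∈ s, G (y + d k) = 0) :
    ∃ n : ℤ, 1 + ∑ k ∈ s, fourier n (d k) = 0 := by
  by_contra! hsymbol
  refine hG0 (eq_zero_of_fourierCoeff_eq_zero hG fun n => ?_)
  have hint : ∀ d : AddCircle T, Integrable (fun y => G (y + d)) haarAddCircle := fun d =>
    (hG.comp (continuous_add_const d)).integrable_of_hasCompactSupport (.of_compactSpace _)
  have hsplit : (fun y => G y + ∑ k ∈ s, G (y + d k)) = G + ∑ k ∈ s, fun y => G (y + d k) := by
    ext y; simp
  have hfactor : (1 + ∑ k ∈ s, fourier n (d k)) * fourierCoeff G n = 0 := by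
    calc (1 + ∑ k ∈ s, fourier n (d k)) * fourierCoeff G n
        = fourierCoeff (fun y => G y + ∑ k ∈ s, G (y + d k)) n := by
          rw [hsplit, fourierCoeff.add (by simpa using hint 0)
            (integrable_finsetSum' _ fun k _ => hint (d k)),
            fourierCoeff.sum _ _ fun k _ => hint (d k)]
          simp [fourierCoeff_comp_add_right, add_mul, Finset.sum_mul]
      _ = 0 := by simp [heq, fourierCoeff]
  exact (mul_eq_zero.mp hfactor).resolve_left (hsymbol n)

end AddCircle

theorem one_add_sum_exp_eq_zero_iff {ι : Type*} (s : Finset ι) (b : ι → ℝ) (α : ℝ) :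
    1 + ∑ k ∈ s, exp (↑(α * b k) * I) = 0 ↔
      1 + ∑ k ∈ s, Real.cos (α * b k) = 0 ∧ ∑ k ∈ s, Real.sin (α * b k) = 0 := by
  simp only [Complex.ext_iff, add_re, one_re, re_sum, zero_re, add_im, one_im, im_sum, zero_im,
    zero_add, exp_ofReal_mul_I_re, exp_ofReal_mul_I_im]

theorem exists_one_add_sum_exp_eq_zero_of_periodic {ι : Type*} (s : Finset ι) (b : ι → ℝ)
    {g : ℝ → ℂ} (hg : Continuous g) (hg0 : g ≠ 0) {T : ℝ} (hT : 0 < T) (hper : Periodic g T)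
    (heq : ∀ w, g w + ∑ k ∈ s, g (w + b k) = 0) :
    ∃ α : ℝ, 1 + ∑ k ∈ s, exp (↑(α * b k) * I) = 0 := by
  have : Fact (0 < T) := ⟨hT⟩
  obtain ⟨n, hn⟩ := exists_one_add_sum_fourier_eq_zero s (fun k => (b k : AddCircle T))
    (G := hper.lift) ((QuotientAddGroup.isQuotientMap_mk _).continuous_iff.mpr hg)
    (fun h => hg0 (funext fun x => congrFun h x))
    (fun y => QuotientAddGroup.induction_on y fun w => heq w)
  refine ⟨2 * π * n / T, ?_⟩
  convert hn using 4 with k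
  rw [fourier_coe_apply]
  push_cast
  ring_nf

theorem cos_mul_add_sum_cos_mul_eq_zero {ι : Type*} (s : Finset ι) (b : ι → ℝ) {α : ℝ}
    (h : 1 + ∑ k ∈ s, exp (↑(α * b k) * I) = 0) (w : ℝ) :
    Real.cos (α * w) + ∑ k ∈ s, Real.cos (α * (w + b k)) = 0 := by
  have := congrArg re (congrArg (exp (↑(α * w) * I) * ·) h)
  simpa only [mul_add, mul_one, Finset.mul_sum, ← Complex.exp_add, ← add_mul, ← ofReal_add, add_re,
    re_sum, exp_ofReal_mul_I_re, mul_zero, zero_re] using this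

theorem exists_pos_periodic_cos_mul {α : ℝ} (hα : α ≠ 0) :
    ∃ T > 0, Periodic (fun x => Real.cos (α * x)) T := by
  have hper := Real.cos_periodic.const_mul α
  refine ⟨|α⁻¹ * (2 * π)|, by positivity, ?_⟩
  rcases abs_choice (α⁻¹ * (2 * π)) with h | h <;> rw [h]
  exacts [hper, hper.neg]

theorem stmt_11_general (N : ℕ) (b : ℕ → ℝ) :
    (∃ g : ℝ → ℝ, Continuous g ∧ g ≠ 0 ∧ (∃ T > (0 : ℝ), ∀ x : ℝ, g (x + T) = g x) ∧
        ∀ w : ℝ, g w + ∑ k ∈ Finset.Icc 1 N, g (w + b k) = 0) ↔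
      ∃ α : ℝ,
        1 + ∑ k ∈ Finset.Icc 1 N, Real.cos (α * b k) = 0 ∧
        ∑ k ∈ Finset.Icc 1 N, Real.sin (α * b k) = 0 := by
  simp_rw [← one_add_sum_exp_eq_zero_iff]
  constructor
  · rintro ⟨g, hg, hg0, ⟨T, hT, hper⟩, heq⟩
    exact exists_one_add_sum_exp_eq_zero_of_periodic _ b (g := fun x => (g x : ℂ))
      (continuous_ofReal.comp hg)
      (fun h => hg0 (funext fun x => by simpa using congrFun h x)) hT
      (fun x => by simp [hper x]) (fun w => by exact_mod_cast heq w)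
  · rintro ⟨α, hα⟩
    have hα0 : α ≠ 0 := by
      rintro rfl
      simp only [zero_mul, ofReal_zero, Complex.exp_zero, sum_const, Nat.card_Icc,
        add_tsub_cancel_right, nsmul_eq_mul, mul_one] at hα
      norm_cast at hα
      omega
    obtain ⟨T, hT, hper⟩ := exists_pos_periodic_cos_mul hα0
    exact ⟨fun w => Real.cos (α * w), by fun_prop, fun h => by simpa using congrFun h 0,
      ⟨T, hT, hper⟩, cos_mul_add_sum_cos_mul_eq_zero _ b hα⟩

/-- the equation `g w + ∑_{k=1}^N g (w + b k) = 0` admits a nonzero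
continuous periodic solution iff there is `α ∈ ℝ` with
`1 + ∑_{k=1}^N cos (α * b k) = 0` and `∑_{k=1}^N sin (α * b k) = 0`. -/
theorem stmt_11 (N : ℕ) (hN : 1 ≤ N) (b : ℕ → ℝ) (hb1 : 0 < b 1)
    (hmono : ∀ k, 1 ≤ k → k < N → b k < b (k + 1)) :
    (∃ g : ℝ → ℝ, Continuous g ∧ g ≠ 0 ∧ (∃ T > (0 : ℝ), ∀ x : ℝ, g (x + T) = g x) ∧
        ∀ w : ℝ, g w + ∑ k ∈ Finset.Icc 1 N, g (w + b k) = 0) ↔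
      ∃ α : ℝ,
        1 + ∑ k ∈ Finset.Icc 1 N, Real.cos (α * b k) = 0 ∧
        ∑ k ∈ Finset.Icc 1 N, Real.sin (α * b k) = 0 :=
  stmt_11_general N b
end

section
/- Let N ≥ 1, let d > 0, set b_k = k·d for k = 1, 2, …, N, and let m be a positive integer not divisible by N + 1. Then the equation g(w) + g(w + b_1) + ⋯ + g(w + b_N) = 0 (for all w ∈ ℝ) admits a nonzero continuous solution g : ℝ → ℝ of period T = d(N+1)/m, i.e., g(x + T) = g(x) for all x ∈ ℝ. -/
/-!
The solution is `g x = cos (2π m x / (d (N + 1)))`, which visibly has period `d (N + 1) / m`.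
Shifting the argument by `k d` multiplies `e^{i·(2π m x / (d (N + 1)))}` by `ζ ^ k`, where
`ζ = e^{2π i m / (N + 1)}` is an `(N + 1)`-st root of unity, and `ζ ≠ 1` exactly because
`N + 1 ∤ m`; so the left-hand side is the real part of a vanishing geometric sum.
-/

open Finset Real Complex

theorem Finset.sum_range_succ_eq_add_sum_Icc {M : Type*} [AddCommMonoid M] (f : ℕ → M) (n : ℕ) :
    ∑ k ∈ range (n + 1), f k = f 0 + ∑ k ∈ Icc 1 n, f k := by
  rw [range_eq_Ico, sum_eq_sum_Ico_succ_bot n.succ_pos]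
  rfl

theorem sum_range_cos_add_mul_two_pi_mul_div {n m : ℕ} (hm : ¬ n ∣ m) (x : ℝ) :
    ∑ k ∈ range n, Real.cos (x + k * (2 * π * m / n)) = 0 := by
  obtain rfl | hn := n.eq_zero_or_pos
  · simp
  set ζ : ℂ := cexp (2 * π * I * m / n)
  have hζ : ζ ≠ 1 := fun h => hm ((exp_two_pi_mul_I_mul_div_eq_one_iff hn.ne').1 h)
  have hζn : ζ ^ n = 1 := by
    have : (n : ℂ) ≠ 0 := Nat.cast_ne_zero.2 hn.ne'
    rw [← Complex.exp_nat_mul, Complex.exp_eq_one_iff]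
    exact ⟨m, by field_simp; push_cast; ring⟩
  have hterm (k : ℕ) :
      cexp ((x + k * (2 * π * m / n) : ℝ) * I) = cexp (x * I) * ζ ^ k := by
    rw [← Complex.exp_nat_mul, ← Complex.exp_add]
    push_cast
    congr 1
    ring
  have hsum : ∑ k ∈ range n, cexp ((x + k * (2 * π * m / n) : ℝ) * I) = 0 := by
    simp only [hterm, ← mul_sum, geom_sum_eq hζ, hζn, sub_self, zero_div, mul_zero]
  simpa only [re_sum, exp_ofReal_mul_I_re, zero_re] using congrArg Complex.re hsum

theorem stmt_15_general (N : ℕ) (d : ℝ) (hd : 0 < d) (m : ℕ)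
    (hm : ¬ (N + 1) ∣ m) :
    ∃ g : ℝ → ℝ, Continuous g ∧ g ≠ 0 ∧
      (∀ x : ℝ, g (x + d * ((N : ℝ) + 1) / (m : ℝ)) = g x) ∧
      ∀ w : ℝ, g w + ∑ k ∈ Finset.Icc 1 N, g (w + (k : ℝ) * d) = 0 := by
  have hm0 : (m : ℝ) ≠ 0 := fun h => hm (by simp [Nat.cast_eq_zero.1 h])
  set c : ℝ := 2 * π * m / (d * (N + 1))
  refine ⟨fun x => Real.cos (x * c), by fun_prop, fun h => by simpa using congrFun h 0, ?_, ?_⟩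
  · have hT : 2 * π * c⁻¹ = d * (N + 1) / m := by
      simp only [c]
      field_simp
    rw [← hT]
    exact Real.cos_periodic.mul_const c
  · intro w
    have hcd : c * d = 2 * π * m / ↑(N + 1) := by
      simp only [c]
      push_cast
      field_simp
    rw [← sum_range_cos_add_mul_two_pi_mul_div hm (w * c), sum_range_succ_eq_add_sum_Icc]
    congr 1
    · simp
    · refine sum_congr rfl fun k _ => ?_
      dsimp only
      rw [← hcd]
      congr 1
      ring

/-- for `b k = k * d` (`d > 0`) and `m` a positive integer not divisible
by `N + 1`, the equation `g w + ∑_{k=1}^N g (w + k * d) = 0` admits a nonzero continuous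
solution of period `T = d * (N + 1) / m`. -/
theorem stmt_15 (N : ℕ) (hN : 1 ≤ N) (d : ℝ) (hd : 0 < d) (m : ℕ) (hm0 : 0 < m)
    (hm : ¬ (N + 1) ∣ m) :
    ∃ g : ℝ → ℝ, Continuous g ∧ g ≠ 0 ∧
      (∀ x : ℝ, g (x + d * ((N : ℝ) + 1) / (m : ℝ)) = g x) ∧
      ∀ w : ℝ, g w + ∑ k ∈ Finset.Icc 1 N, g (w + (k : ℝ) * d) = 0 :=
  stmt_15_general N d hd m hm
end

section
/- Let N ≥ 2. Define g : [0, N+1] → ℝ by g(x) = 1 for 0 ≤ x ≤ N−1, g(x) = −(N+1)x + N² for N−1 < x ≤ N, and g(x) = (N+1)x − N(N+2) for N < x ≤ N+1, and let g̃ : ℝ → ℝ be the (N+1)-periodic extension of g. Then g̃ is continuous, not identically zero, and satisfies g̃(x) + g̃(x+1) + g̃(x+2) + ⋯ + g̃(x+N) = 0 for all x ∈ ℝ. -/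
/-!
Because `g̃` has period `N + 1`, the sum `S x = ∑_{k=0}^{N} g̃ (x + k)` has period `1`, so it
suffices to evaluate it for `x ∈ [0, 1)`. There the first `N - 1` terms equal `1`, while the last
two lie on the descending and ascending branches of the dip and add up to `1 - N`. Continuity of
`g̃` comes from that of `g` together with `g 0 = g (N + 1)`: `g̃` factors through the circle
`ℝ ⧸ (N + 1)ℤ` as the continuous lift of `g`.
-/

open Function Finset

theorem Function.Periodic.continuous_of_continuousOn_Icc {𝕜 β : Type*} [AddCommGroup 𝕜]
    [LinearOrder 𝕜] [IsOrderedAddMonoid 𝕜] [Archimedean 𝕜] [TopologicalSpace 𝕜] [OrderTopology 𝕜]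
    [TopologicalSpace β] {f : 𝕜 → β} {c : 𝕜} (hf : Periodic f c) (hc : 0 < c)
    (hcont : ContinuousOn f (Set.Icc 0 c)) : Continuous f := by
  have := Fact.mk hc
  have hlift : AddCircle.liftIco c 0 f ∘ (↑) = f := funext fun x => by
    obtain ⟨n, hn, -⟩ := existsUnique_sub_zsmul_mem_Ico hc x 0
    have hx : (x : AddCircle c) = ↑(x - n • c) := by
      rw [AddCircle.coe_sub, AddCircle.coe_zsmul, AddCircle.coe_period, smul_zero, sub_zero]
    rw [comp_apply, hx, AddCircle.liftIco_zero_coe_apply (by simpa using hn), hf.sub_zsmul_eq]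
  rw [← hlift]
  exact (AddCircle.liftIco_zero_continuous (by simpa using (hf 0).symm) hcont).comp
    continuous_quotient_mk'

theorem Function.Periodic.sum_range_comp_add_natCast {α M : Type*} [AddCommMonoidWithOne α]
    [AddCommMonoid M] {f : α → M} {n : ℕ} (hf : Periodic f n) :
    Periodic (fun x => ∑ k ∈ range n, f (x + k)) 1 := by
  intro x
  cases n with
  | zero => simp
  | succ m =>
    dsimp only
    rw [sum_range_succ, sum_range_succ', Nat.cast_zero, add_zero, ← hf x]
    push_cast
    simp only [add_assoc, add_comm (1 : α)]

theorem Finset.add_sum_Icc_one_eq_sum_range {M : Type*} [AddCommMonoid M] (f : ℕ → M) (n : ℕ) :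
    f 0 + ∑ k ∈ Icc 1 n, f k = ∑ k ∈ range (n + 1), f k := by
  rw [range_eq_Ico, sum_eq_sum_Ico_succ_bot (Nat.succ_pos n), zero_add, Nat.succ_eq_add_one,
    Ico_add_one_right_eq_Icc]

noncomputable def plateauDip (a x : ℝ) : ℝ :=
  if x ≤ a - 1 then 1 else if x ≤ a then -(a + 1) * x + a ^ 2 else (a + 1) * x - a * (a + 2)

theorem continuous_plateauDip (a : ℝ) : Continuous (plateauDip a) := by
  refine Continuous.if_le continuous_const ?_ continuous_id continuous_const fun x hx => ?_
  · exact Continuous.if_le (by fun_prop) (by fun_prop) continuous_id continuous_const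
      fun x hx => by rw [hx]; ring
  · rw [if_pos (by rw [hx]; linarith), hx]; ring

theorem plateauDip_of_le {a x : ℝ} (hx : x ≤ a - 1) : plateauDip a x = 1 := if_pos hx

theorem plateauDip_add_plateauDip_add_one {a x : ℝ} (hx : x ∈ Set.Ico (a - 1) a) :
    plateauDip a x + plateauDip a (x + 1) = 1 - a := by
  obtain ⟨hx₁, hx₂⟩ := hx
  rcases hx₁.eq_or_lt with rfl | hx₁
  · rw [plateauDip_of_le le_rfl, plateauDip, if_neg (by linarith), if_pos (by linarith)]
    ring
  · rw [plateauDip, plateauDip, if_neg hx₁.not_ge, if_pos hx₂.le, if_neg (by linarith),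
      if_neg (by linarith)]
    ring

theorem sum_range_plateauDip {n : ℕ} (hn : 1 ≤ n) {y : ℝ} (hy : y ∈ Set.Ico 0 1) :
    ∑ k ∈ range (n + 1), plateauDip n (y + k) = 0 := by
  obtain ⟨m, rfl⟩ := Nat.exists_eq_add_of_le' hn
  obtain ⟨hy₀, hy₁⟩ := hy
  push_cast
  have hplateau : ∀ k ∈ range m, plateauDip (m + 1) (y + k) = 1 := fun k hk => by
    have : (k : ℝ) + 1 ≤ m := by exact_mod_cast mem_range.mp hk
    exact plateauDip_of_le (by linarith)
  have hdip := plateauDip_add_plateauDip_add_one (a := m + 1) (x := y + m)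
    ⟨by linarith, by linarith⟩
  rw [sum_range_succ, sum_range_succ, sum_congr rfl hplateau, sum_const, card_range, nsmul_one,
    add_assoc, Nat.cast_succ m, ← add_assoc y, hdip]
  ring

/-- the `(N+1)`-periodic extension `g̃` of the piecewise function
`g(x) = 1` on `[0, N-1]`, `g(x) = -(N+1)x + N²` on `(N-1, N]`,
`g(x) = (N+1)x - N(N+2)` on `(N, N+1]` is continuous, not identically zero, and
satisfies `g̃(x) + g̃(x+1) + ⋯ + g̃(x+N) = 0` for all `x ∈ ℝ`. -/
theorem stmt_16 (N : ℕ) (hN : 2 ≤ N) (g gt : ℝ → ℝ)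
    (hg : g = fun x : ℝ =>
      if x ≤ (N : ℝ) - 1 then 1
      else if x ≤ (N : ℝ) then -((N : ℝ) + 1) * x + (N : ℝ) ^ 2
      else ((N : ℝ) + 1) * x - (N : ℝ) * ((N : ℝ) + 2))
    (hper : ∀ x : ℝ, gt (x + ((N : ℝ) + 1)) = gt x)
    (hagree : ∀ x ∈ Set.Icc (0 : ℝ) ((N : ℝ) + 1), gt x = g x) :
    Continuous gt ∧ gt ≠ 0 ∧
      ∀ x : ℝ, gt x + ∑ k ∈ Finset.Icc 1 N, gt (x + (k : ℝ)) = 0 := by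
  obtain rfl : g = plateauDip N := hg
  have hpos : (0 : ℝ) < N + 1 := by positivity
  refine ⟨Periodic.continuous_of_continuousOn_Icc hper hpos
    ((continuous_plateauDip N).continuousOn.congr hagree), fun h => ?_, fun x => ?_⟩
  · have hN₁ : (1 : ℝ) ≤ N := by exact_mod_cast (by omega : 1 ≤ N)
    have h0 := hagree 0 ⟨le_rfl, hpos.le⟩
    rw [h, plateauDip_of_le (by linarith)] at h0
    exact zero_ne_one h0
  · have hperiodic : Periodic gt ↑(N + 1) := by simpa using hper
    obtain ⟨y, hy, hxy⟩ := hperiodic.sum_range_comp_add_natCast.exists_mem_Ico₀ one_pos x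
    have hagree' : ∀ k ∈ range (N + 1), gt (y + k) = plateauDip N (y + k) := fun k hk => by
      have : (k : ℝ) ≤ N := by exact_mod_cast Nat.lt_succ_iff.mp (mem_range.mp hk)
      exact hagree _ ⟨by linarith [hy.1, k.cast_nonneg (α := ℝ)], by linarith [hy.2]⟩
    have hsum := add_sum_Icc_one_eq_sum_range (fun k => gt (x + k)) N
    rw [Nat.cast_zero, add_zero] at hsum
    rw [hsum, hxy, sum_congr rfl hagree', sum_range_plateauDip (by omega) hy]
end
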